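/- arXiv:2307.06538 — 4 statements merged into one kernel-verified Lean document; each statement's English description precedes it below -/
import Mathlib

section
/- Let (x_t, y_t) be generated by a linear dynamical system with matrices A, B, C, D with Gaussian isotropic inputs u_t ~ N(0, I_p), process noise w_t ~ N(0, I_n), observation noise z_t ~ N(0, I_m), and initial state x_0 ~ N(0, I_n), all mutually independent. Define X_j = D if j = 0 and X_j = C A^{j-1} B if j ≥ 1. Then for all t, k_1, k_2, k_3 ≥ 0, the expected order-6 tensor E[ y_{t+k1+k2+k3+2} ⊗ u_{t+k1+k2+2} ⊗ y_{t+k1+k2+1} ⊗ u_{t+k1+1} ⊗ y_{t+k1} ⊗ u_t ], viewed (after flattening consecutive pairs of modes into matrices) as an order-3 tensor, equals X_{k3} ⊗ X_{k2} ⊗ X_{k1}. -/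
open MeasureTheory ProbabilityTheory Matrix

/-- The Markov parameters of an LDS: `X_0 = D` and `X_j = C A^{j-1} B` for `j ≥ 1`. -/
noncomputable def markovParam {n m p : ℕ} (A : Matrix (Fin n) (Fin n) ℝ)
    (B : Matrix (Fin n) (Fin p) ℝ) (C : Matrix (Fin m) (Fin n) ℝ)
    (D : Matrix (Fin m) (Fin p) ℝ) (j : ℕ) : Matrix (Fin m) (Fin p) ℝ :=
  if j = 0 then D else C * A ^ (j - 1) * B

/-- Index type for all real coordinates of the sources of randomness of an LDS:
coordinates of the inputs `u_t`, process noises `w_t`, observation noises `z_t`,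
and the initial state `x₀`. -/
abbrev LDSCoord (n m p : ℕ) : Type :=
  ((ℕ × Fin p) ⊕ (ℕ × Fin n)) ⊕ ((ℕ × Fin m) ⊕ Fin n)

/-- The family of all real coordinates of the sources of randomness. -/
def ldsCoords {Ω : Type*} {n m p : ℕ}
    (u : ℕ → Ω → Fin p → ℝ) (w : ℕ → Ω → Fin n → ℝ)
    (z : ℕ → Ω → Fin m → ℝ) (x0 : Ω → Fin n → ℝ) :
    LDSCoord n m p → Ω → ℝ :=
  Sum.elim
    (Sum.elim (fun ta ω => u ta.1 ω ta.2) (fun ta ω => w ta.1 ω ta.2))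
    (Sum.elim (fun ta ω => z ta.1 ω ta.2) (fun a ω => x0 ω a))

set_option linter.unusedSectionVars false

section GaussianFacts
open Real Filter
open scoped NNReal ENNReal


lemma int_pow_exp (k : ℕ) : Integrable (fun x : ℝ => x ^ k * Real.exp (-x ^ 2 / 2)) := by
  have hg : Integrable (fun x : ℝ => ((Nat.factorial k : ℝ) * 4 ^ k + 1) * Real.exp (-(4⁻¹ : ℝ) * x ^ 2)) :=
    (integrable_exp_neg_mul_sq (by norm_num : (0:ℝ) < 4⁻¹)).const_mul _
  refine hg.mono' ?_ (Filter.Eventually.of_forall fun x => ?_)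
  · exact (continuous_pow k).aestronglyMeasurable.mul
      (Real.continuous_exp.comp (by fun_prop)).aestronglyMeasurable
  · have h0 : (0:ℝ) ≤ x ^ 2 / 4 := by positivity
    have h1 : |x| ^ k ≤ 1 + (x ^ 2) ^ k := by
      rcases le_or_gt |x| 1 with h | h
      · have hh : |x| ^ k ≤ 1 := pow_le_one₀ (abs_nonneg x) h
        nlinarith [pow_nonneg (sq_nonneg x) k]
      · have h2 : |x| ^ k ≤ |x| ^ (2 * k) :=
          pow_le_pow_right₀ h.le (by omega)
        have h3 : |x| ^ (2 * k) = (x ^ 2) ^ k := by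
          rw [pow_mul, sq_abs]
        nlinarith [h2, h3]
    have h2 : (x ^ 2) ^ k ≤ (Nat.factorial k : ℝ) * 4 ^ k * Real.exp (x ^ 2 / 4) := by
      have hle := Real.pow_div_factorial_le_exp (x ^ 2 / 4) h0 k
      have hk : (0:ℝ) < (Nat.factorial k : ℝ) := by positivity
      rw [div_le_iff₀ hk] at hle
      have h4 : (x ^ 2) ^ k = (x ^ 2 / 4) ^ k * 4 ^ k := by
        rw [div_pow]; field_simp
      rw [h4]
      calc (x ^ 2 / 4) ^ k * 4 ^ k ≤ (Real.exp (x ^ 2 / 4) * (Nat.factorial k : ℝ)) * 4 ^ k :=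
            mul_le_mul_of_nonneg_right hle (by positivity)
        _ = (Nat.factorial k : ℝ) * 4 ^ k * Real.exp (x ^ 2 / 4) := by ring
    have hexp1 : (1:ℝ) ≤ Real.exp (x ^ 2 / 4) := Real.one_le_exp h0
    have hb : |x| ^ k ≤ ((Nat.factorial k : ℝ) * 4 ^ k + 1) * Real.exp (x ^ 2 / 4) := by
      nlinarith [h1, h2, hexp1, Real.exp_pos (x ^ 2 / 4)]
    have key : Real.exp (x ^ 2 / 4) * Real.exp (-x ^ 2 / 2) = Real.exp (-(4⁻¹:ℝ) * x ^ 2) := by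
      rw [← Real.exp_add]; ring_nf
    rw [norm_mul, norm_pow, Real.norm_eq_abs, Real.norm_eq_abs, Real.abs_exp]
    calc |x| ^ k * Real.exp (-x ^ 2 / 2)
        ≤ (((Nat.factorial k : ℝ) * 4 ^ k + 1) * Real.exp (x ^ 2 / 4)) * Real.exp (-x ^ 2 / 2) :=
          mul_le_mul_of_nonneg_right hb (Real.exp_pos _).le
      _ = ((Nat.factorial k : ℝ) * 4 ^ k + 1) * (Real.exp (x ^ 2 / 4) * Real.exp (-x ^ 2 / 2)) := by ring
      _ = ((Nat.factorial k : ℝ) * 4 ^ k + 1) * Real.exp (-(4⁻¹:ℝ) * x ^ 2) := by rw [key]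



lemma int_exp : Integrable (fun x : ℝ => Real.exp (-x ^ 2 / 2)) := by
  simpa using int_pow_exp 0

lemma pdf01 (x : ℝ) : gaussianPDFReal 0 1 x = (Real.sqrt (2 * π))⁻¹ * Real.exp (-x ^ 2 / 2) := by
  simp [gaussianPDFReal]

lemma integral_gaussianReal01 (g : ℝ → ℝ) :
    ∫ x, g x ∂(gaussianReal 0 1) = ∫ x, gaussianPDFReal 0 1 x * g x := by
  rw [gaussianReal_of_var_ne_zero 0 one_ne_zero]
  have hrw : (gaussianPDF 0 1)
      = fun x => ((Real.toNNReal (gaussianPDFReal 0 1 x) : ℝ≥0) : ℝ≥0∞) := by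
    funext x; rfl
  rw [hrw, integral_withDensity_eq_integral_smul
      ((measurable_gaussianPDFReal 0 1).real_toNNReal) g]
  congr 1
  funext x
  rw [NNReal.smul_def, smul_eq_mul, Real.coe_toNNReal _ (gaussianPDFReal_nonneg 0 1 x)]

lemma integrable_gaussianReal01 (g : ℝ → ℝ) :
    Integrable g (gaussianReal 0 1) ↔
      Integrable (fun x => gaussianPDFReal 0 1 x * g x) := by
  rw [gaussianReal_of_var_ne_zero 0 one_ne_zero]
  have hrw : (gaussianPDF 0 1)
      = fun x => ((Real.toNNReal (gaussianPDFReal 0 1 x) : ℝ≥0) : ℝ≥0∞) := by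
    funext x; rfl
  rw [hrw, integrable_withDensity_iff_integrable_smul
      ((measurable_gaussianPDFReal 0 1).real_toNNReal)]
  constructor <;> intro h <;> refine h.congr (Filter.Eventually.of_forall fun x => ?_) <;>
    simp [NNReal.smul_def, Real.coe_toNNReal _ (gaussianPDFReal_nonneg 0 1 x)]

lemma gauss_int_pow (k : ℕ) : Integrable (fun x : ℝ => x ^ k) (gaussianReal 0 1) := by
  rw [integrable_gaussianReal01]
  have : (fun x : ℝ => gaussianPDFReal 0 1 x * x ^ k)
      = fun x => (Real.sqrt (2 * π))⁻¹ * (x ^ k * Real.exp (-x ^ 2 / 2)) := by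
    funext x; rw [pdf01]; ring
  rw [this]
  exact (int_pow_exp k).const_mul _

lemma gauss_moment_one : ∫ x, x ∂(gaussianReal 0 1) = 0 := by
  rw [integral_gaussianReal01]
  set f : ℝ → ℝ := fun x => gaussianPDFReal 0 1 x * x with hf
  have A : MeasurableEmbedding (fun x : ℝ => -x) :=
    (Homeomorph.neg ℝ).measurableEmbedding
  have h1 : ∫ x, f x = ∫ x, f (-x) := by
    conv_lhs => rw [← Measure.map_neg_eq_self (volume : Measure ℝ)]
    exact A.integral_map f
  have h2 : ∀ x, f (-x) = -f x := by
    intro x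
    simp only [hf, pdf01]
    have h : (-x : ℝ) ^ 2 = x ^ 2 := by ring
    rw [h]; ring
  simp only [h2, integral_neg] at h1
  linarith [h1]

lemma integral_exp_half : ∫ x : ℝ, Real.exp (-x ^ 2 / 2) = Real.sqrt (2 * π) := by
  have h := integral_gaussian (1/2 : ℝ)
  have h2 : (fun x : ℝ => Real.exp (-(1/2 : ℝ) * x ^ 2)) = fun x : ℝ => Real.exp (-x ^ 2 / 2) := by
    funext x; ring_nf
  rw [h2] at h
  rw [h]
  congr 1
  ring

lemma integral_sq_exp_half : ∫ x : ℝ, x ^ 2 * Real.exp (-x ^ 2 / 2) = Real.sqrt (2 * π) := by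
  have habs1 : ∫ x : ℝ, x ^ 2 * Real.exp (-x ^ 2 / 2)
      = 2 * ∫ x in Set.Ioi (0:ℝ), x ^ 2 * Real.exp (-x ^ 2 / 2) := by
    rw [← integral_comp_abs (f := fun t => t ^ 2 * Real.exp (-t ^ 2 / 2))]
    congr 1; funext x; rw [sq_abs]
  have habs2 : ∫ x : ℝ, Real.exp (-x ^ 2 / 2)
      = 2 * ∫ x in Set.Ioi (0:ℝ), Real.exp (-x ^ 2 / 2) := by
    rw [← integral_comp_abs (f := fun t => Real.exp (-t ^ 2 / 2))]
    congr 1; funext x; rw [sq_abs]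
  set F : ℝ → ℝ := fun x => -x * Real.exp (-x ^ 2 / 2) with hF
  have hderiv : ∀ x ∈ Set.Ioi (0:ℝ), HasDerivAt F ((x ^ 2 - 1) * Real.exp (-x ^ 2 / 2)) x := by
    intro x _
    have hg : HasDerivAt (fun x : ℝ => Real.exp (-x ^ 2 / 2)) (Real.exp (-x ^ 2 / 2) * (-x)) x := by
      have h1 : HasDerivAt (fun x : ℝ => -x ^ 2 / 2) (-x) x := by
        have := ((hasDerivAt_pow 2 x).neg).div_const 2
        refine this.congr_deriv ?_
        push_cast; ring
      exact (Real.hasDerivAt_exp _).comp x h1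
    have hmul := ((hasDerivAt_id x).neg).mul hg
    refine hmul.congr_deriv ?_
    simp only [Pi.neg_apply, id]
    ring
  have hFtend : Tendsto F atTop (nhds 0) := by
    have hlo := rpow_mul_exp_neg_mul_sq_isLittleO_exp_neg (by norm_num : (0:ℝ) < 1/2) 1
    have hdiv : Tendsto (fun x : ℝ => x / 2) atTop atTop :=
      tendsto_id.atTop_div_const two_pos
    have hexp0 := Real.tendsto_exp_neg_atTop_nhds_zero.comp hdiv
    have hexp : Tendsto (fun x : ℝ => Real.exp (-(1/2 : ℝ) * x)) atTop (nhds 0) := by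
      refine hexp0.congr fun x => ?_
      simp only [Function.comp]
      congr 1; ring
    have h1 : Tendsto (fun x : ℝ => x ^ (1:ℝ) * Real.exp (-(1/2 : ℝ) * x ^ 2)) atTop (nhds 0) :=
      hlo.trans_tendsto hexp
    have h2 := h1.neg
    rw [neg_zero] at h2
    refine h2.congr fun x => ?_
    rw [Real.rpow_one]
    simp only [hF]
    have : -(1/2 : ℝ) * x ^ 2 = -x ^ 2 / 2 := by ring
    rw [this]; ring
  have hcont : ContinuousWithinAt F (Set.Ici 0) 0 := by
    apply Continuous.continuousWithinAt
    fun_prop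
  have hFint : IntegrableOn (fun x : ℝ => (x ^ 2 - 1) * Real.exp (-x ^ 2 / 2)) (Set.Ioi 0) := by
    have he : (fun x : ℝ => (x ^ 2 - 1) * Real.exp (-x ^ 2 / 2))
        = fun x => x ^ 2 * Real.exp (-x ^ 2 / 2) - Real.exp (-x ^ 2 / 2) := by
      funext x; ring
    rw [he]
    exact ((int_pow_exp 2).sub int_exp).integrableOn
  have hibp := integral_Ioi_of_hasDerivAt_of_tendsto hcont hderiv hFint hFtend
  have hF0 : F 0 = 0 := by simp [hF]
  rw [hF0, sub_zero] at hibp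
  have hsub : ∫ x in Set.Ioi (0:ℝ), (x ^ 2 - 1) * Real.exp (-x ^ 2 / 2)
      = (∫ x in Set.Ioi (0:ℝ), x ^ 2 * Real.exp (-x ^ 2 / 2))
        - ∫ x in Set.Ioi (0:ℝ), Real.exp (-x ^ 2 / 2) := by
    rw [← integral_sub ((int_pow_exp 2).integrableOn) (int_exp.integrableOn)]
    congr 1; funext x; ring
  rw [hsub] at hibp
  have := integral_exp_half
  linarith [habs1, habs2, hibp, this]

lemma gauss_moment_two : ∫ x, x ^ 2 ∂(gaussianReal 0 1) = 1 := by
  rw [integral_gaussianReal01]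
  have h : (fun x : ℝ => gaussianPDFReal 0 1 x * x ^ 2)
      = fun x => (Real.sqrt (2 * π))⁻¹ * (x ^ 2 * Real.exp (-x ^ 2 / 2)) := by
    funext x; rw [pdf01]; ring
  have h2 : ∫ x : ℝ, (Real.sqrt (2 * π))⁻¹ * (x ^ 2 * Real.exp (-x ^ 2 / 2))
      = (Real.sqrt (2 * π))⁻¹ • ∫ x : ℝ, x ^ 2 * Real.exp (-x ^ 2 / 2) := by
    rw [← integral_smul]
    simp [smul_eq_mul]
  rw [h, h2, integral_sq_exp_half, smul_eq_mul]
  have : Real.sqrt (2 * π) ≠ 0 := by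
    positivity
  field_simp

end GaussianFacts

section IndepMachinery
open Real Filter Finset



variable {Ω : Type*} [MeasurableSpace Ω] {μ : Measure Ω} [IsProbabilityMeasure μ]
  {ι : Type*} {ξ : ι → Ω → ℝ}

section Indep

variable (hmeas : ∀ i, Measurable (ξ i)) (hgauss : ∀ i, μ.map (ξ i) = gaussianReal 0 1)
  (hindep : iIndepFun ξ μ)

include hmeas hgauss in
lemma xi_pow_integrable (i : ι) (k : ℕ) : Integrable (fun ω => ξ i ω ^ k) μ := by
  have h : Integrable (fun x : ℝ => x ^ k) (μ.map (ξ i)) := by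
    rw [hgauss]; exact gauss_int_pow k
  rw [integrable_map_measure (continuous_pow k).aestronglyMeasurable
      (hmeas i).aemeasurable] at h
  exact h

include hmeas hgauss in
lemma xi_moment (i : ι) (k : ℕ) :
    ∫ ω, ξ i ω ^ k ∂μ = ∫ x, x ^ k ∂(gaussianReal 0 1) := by
  rw [← hgauss i, integral_map (hmeas i).aemeasurable
    (continuous_pow k).aestronglyMeasurable]

include hmeas hgauss hindep in
lemma prod_pow_integral (s : Finset ι) (k : ι → ℕ) :
    Integrable (fun ω => ∏ i ∈ s, ξ i ω ^ k i) μ ∧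
      ∫ ω, ∏ i ∈ s, ξ i ω ^ k i ∂μ = ∏ i ∈ s, ∫ ω, ξ i ω ^ k i ∂μ := by
  classical
  induction s using Finset.induction_on with
  | empty => simp
  | @insert i s hi ih =>
    set g : ι → Ω → ℝ := fun j ω => ξ j ω ^ k j with hg
    have hgm : ∀ j, Measurable (g j) := fun j => (hmeas j).pow_const _
    have hgindep : iIndepFun g μ :=
      hindep.comp (fun j (x : ℝ) => x ^ k j) (fun j => measurable_id.pow_const _)
    have hIF : IndepFun (∏ j ∈ s, g j) (g i) μ :=
      hgindep.indepFun_finset_prod_of_notMem hgm hi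
    have hint_i : Integrable (g i) μ := xi_pow_integrable hmeas hgauss i (k i)
    have hint_s : Integrable (∏ j ∈ s, g j) μ := by
      have := ih.1
      refine this.congr (Filter.Eventually.of_forall fun ω => ?_)
      simp [Finset.prod_apply, hg]
    constructor
    · have := hIF.symm.integrable_mul hint_i hint_s
      refine this.congr (Filter.Eventually.of_forall fun ω => ?_)
      simp [Finset.prod_apply, hg, Finset.prod_insert hi]
    · have hmul := hIF.integral_mul_eq_mul_integral hint_s.aestronglyMeasurable hint_i.aestronglyMeasurable
      have e1 : ∫ ω, ∏ j ∈ insert i s, ξ j ω ^ k j ∂μ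
          = ∫ ω, (∏ j ∈ s, g j) ω * g i ω ∂μ := by
        congr 1; funext ω
        simp [Finset.prod_apply, hg, Finset.prod_insert hi, mul_comm]
      have e2 : (∏ j ∈ s, g j) * g i = fun ω => (∏ j ∈ s, g j) ω * g i ω := rfl
      have e3 : ∫ ω, (∏ j ∈ s, g j) ω ∂μ = ∏ j ∈ s, ∫ ω, ξ j ω ^ k j ∂μ := by
        rw [← ih.2]; congr 1; funext ω; simp [Finset.prod_apply, hg]
      have e4 : integral μ (g i) = ∫ ω, ξ i ω ^ k i ∂μ := rfl
      rw [e1, ← e2, hmul, Finset.prod_insert hi]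
      rw [show integral μ (∏ j ∈ s, g j) = ∫ ω, (∏ j ∈ s, g j) ω ∂μ from rfl, e3, e4]
      ring

include hmeas hgauss hindep in
lemma prod_map_eq (N : ℕ) (ν : Fin N → ι) [DecidableEq ι] : ∀ ω : Ω,
    ∏ t, ξ (ν t) ω = ∏ i ∈ Finset.univ.image ν,
      ξ i ω ^ (Finset.univ.filter (fun t => ν t = i)).card := by
  intro ω
  rw [← Finset.prod_fiberwise_of_maps_to
    (fun t _ => Finset.mem_image_of_mem ν (Finset.mem_univ t)) (fun t => ξ (ν t) ω)]
  refine Finset.prod_congr rfl fun i _ => ?_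
  have h1 : ∏ t ∈ Finset.univ.filter (fun t => ν t = i), ξ (ν t) ω
      = ∏ _t ∈ Finset.univ.filter (fun t => ν t = i), ξ i ω :=
    Finset.prod_congr rfl (fun t ht => by rw [(Finset.mem_filter.mp ht).2])
  rw [h1, Finset.prod_const]

include hmeas hgauss hindep in
lemma prod_map_integrable (N : ℕ) (ν : Fin N → ι) :
    Integrable (fun ω => ∏ t, ξ (ν t) ω) μ := by
  classical
  have h := (prod_pow_integral hmeas hgauss hindep (Finset.univ.image ν)
    (fun i => (Finset.univ.filter (fun t => ν t = i)).card)).1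
  refine h.congr (Filter.Eventually.of_forall fun ω => ?_)
  exact (prod_map_eq hmeas hgauss hindep N ν ω).symm

include hmeas hgauss hindep in
lemma prod_map_integral (N : ℕ) (ν : Fin N → ι) [DecidableEq ι] :
    ∫ ω, ∏ t, ξ (ν t) ω ∂μ = ∏ i ∈ Finset.univ.image ν,
      ∫ x, x ^ (Finset.univ.filter (fun t => ν t = i)).card ∂(gaussianReal 0 1) := by
  simp_rw [prod_map_eq hmeas hgauss hindep N ν]
  rw [(prod_pow_integral hmeas hgauss hindep _ _).2]
  exact Finset.prod_congr rfl fun i _ => xi_moment hmeas hgauss i _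

include hmeas hgauss hindep in
lemma six_integrable (i1 i2 i3 i4 i5 i6 : ι) :
    Integrable (fun ω => ξ i1 ω * ξ i2 ω * ξ i3 ω * ξ i4 ω * ξ i5 ω * ξ i6 ω) μ := by
  have h := prod_map_integrable hmeas hgauss hindep 6 ![i1, i2, i3, i4, i5, i6]
  refine h.congr (Filter.Eventually.of_forall fun ω => ?_)
  show ∏ t : Fin 6, ξ (![i1, i2, i3, i4, i5, i6] t) ω
      = ξ i1 ω * ξ i2 ω * ξ i3 ω * ξ i4 ω * ξ i5 ω * ξ i6 ω
  rw [Fin.prod_univ_six]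
  rfl

include hmeas hgauss hindep in
lemma six_integral [DecidableEq ι] (c1 j1 c2 j2 c3 j3 : ι)
    (h21 : c2 ≠ j1) (h31 : c3 ≠ j1) (hj21 : j2 ≠ j1) (h32 : c3 ≠ j2)
    (hj31 : j3 ≠ j1) (hj32 : j3 ≠ j2) :
    ∫ ω, ξ c1 ω * ξ j1 ω * ξ c2 ω * ξ j2 ω * ξ c3 ω * ξ j3 ω ∂μ =
      (if c1 = j1 then (1:ℝ) else 0) * (if c2 = j2 then 1 else 0) *
        (if c3 = j3 then 1 else 0) := by
  have hrw : ∫ ω, ξ c1 ω * ξ j1 ω * ξ c2 ω * ξ j2 ω * ξ c3 ω * ξ j3 ω ∂μ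
      = ∫ ω, ∏ t : Fin 6, ξ ((![c1, j1, c2, j2, c3, j3]) t) ω ∂μ := by
    congr 1; funext ω; rw [Fin.prod_univ_six]; rfl
  rw [hrw, prod_map_integral hmeas hgauss hindep 6 ![c1, j1, c2, j2, c3, j3]]
  by_cases h1 : c1 = j1
  · by_cases h2 : c2 = j2
    · by_cases h3 : c3 = j3
      · subst h1; subst h2; subst h3
        have himg : Finset.univ.image ![c1, c1, c2, c2, c3, c3] = {c1, c2, c3} := by
          ext a
          simp only [Finset.mem_image, Finset.mem_insert, Finset.mem_singleton]
          constructor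
          · rintro ⟨t, -, rfl⟩
            fin_cases t <;> tauto
          · rintro (rfl | rfl | rfl)
            exacts [⟨0, Finset.mem_univ _, rfl⟩, ⟨2, Finset.mem_univ _, rfl⟩,
              ⟨4, Finset.mem_univ _, rfl⟩]
        have hm1 : (Finset.univ.filter
            (fun t => (![c1, c1, c2, c2, c3, c3]) t = c1)).card = 2 := by
          have he : (Finset.univ.filter (fun t => (![c1, c1, c2, c2, c3, c3]) t = c1))
              = {0, 1} := by
            ext t; rw [Finset.mem_filter]; fin_cases t
            · exact iff_of_true ⟨Finset.mem_univ _, rfl⟩ (by decide)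
            · exact iff_of_true ⟨Finset.mem_univ _, rfl⟩ (by decide)
            · exact iff_of_false (by intro h; exact hj21 h.2) (by decide)
            · exact iff_of_false (by intro h; exact hj21 h.2) (by decide)
            · exact iff_of_false (by intro h; exact hj31 h.2) (by decide)
            · exact iff_of_false (by intro h; exact hj31 h.2) (by decide)
          rw [he]; rfl
        have hm2 : (Finset.univ.filter
            (fun t => (![c1, c1, c2, c2, c3, c3]) t = c2)).card = 2 := by
          have he : (Finset.univ.filter (fun t => (![c1, c1, c2, c2, c3, c3]) t = c2))
              = {2, 3} := by
            ext t; rw [Finset.mem_filter]; fin_cases t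
            · exact iff_of_false (by intro h; exact hj21 h.2.symm) (by decide)
            · exact iff_of_false (by intro h; exact hj21 h.2.symm) (by decide)
            · exact iff_of_true ⟨Finset.mem_univ _, rfl⟩ (by decide)
            · exact iff_of_true ⟨Finset.mem_univ _, rfl⟩ (by decide)
            · exact iff_of_false (by intro h; exact hj32 h.2) (by decide)
            · exact iff_of_false (by intro h; exact hj32 h.2) (by decide)
          rw [he]; rfl
        have hm3 : (Finset.univ.filter
            (fun t => (![c1, c1, c2, c2, c3, c3]) t = c3)).card = 2 := by
          have he : (Finset.univ.filter (fun t => (![c1, c1, c2, c2, c3, c3]) t = c3))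
              = {4, 5} := by
            ext t; rw [Finset.mem_filter]; fin_cases t
            · exact iff_of_false (by intro h; exact hj31 h.2.symm) (by decide)
            · exact iff_of_false (by intro h; exact hj31 h.2.symm) (by decide)
            · exact iff_of_false (by intro h; exact hj32 h.2.symm) (by decide)
            · exact iff_of_false (by intro h; exact hj32 h.2.symm) (by decide)
            · exact iff_of_true ⟨Finset.mem_univ _, rfl⟩ (by decide)
            · exact iff_of_true ⟨Finset.mem_univ _, rfl⟩ (by decide)
          rw [he]; rfl
        have hne1 : c1 ∉ ({c2, c3} : Finset ι) := by
          simp [hj21.symm, hj31.symm]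
        have hne2 : c2 ∉ ({c3} : Finset ι) := by simp [hj32.symm]
        rw [himg, Finset.prod_insert hne1, Finset.prod_insert hne2,
          Finset.prod_singleton, hm1, hm2, hm3, gauss_moment_two]
        simp
      · subst h1; subst h2
        have hmem : j3 ∈ Finset.univ.image ![c1, c1, c2, c2, c3, j3] :=
          Finset.mem_image.mpr ⟨5, Finset.mem_univ _, rfl⟩
        have hcard : (Finset.univ.filter
            (fun t => (![c1, c1, c2, c2, c3, j3]) t = j3)).card = 1 := by
          have he : (Finset.univ.filter (fun t => (![c1, c1, c2, c2, c3, j3]) t = j3))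
              = {5} := by
            ext t; rw [Finset.mem_filter]; fin_cases t
            · exact iff_of_false (by intro h; exact hj31 h.2.symm) (by decide)
            · exact iff_of_false (by intro h; exact hj31 h.2.symm) (by decide)
            · exact iff_of_false (by intro h; exact hj32 h.2.symm) (by decide)
            · exact iff_of_false (by intro h; exact hj32 h.2.symm) (by decide)
            · exact iff_of_false (by intro h; exact h3 h.2) (by decide)
            · exact iff_of_true ⟨Finset.mem_univ _, rfl⟩ (by decide)
          rw [he]; rfl
        rw [Finset.prod_eq_zero hmem (by rw [hcard]; simpa using gauss_moment_one)]
        simp [h3]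
    · subst h1
      have hmem : j2 ∈ Finset.univ.image ![c1, c1, c2, j2, c3, j3] :=
        Finset.mem_image.mpr ⟨3, Finset.mem_univ _, rfl⟩
      have hcard : (Finset.univ.filter
          (fun t => (![c1, c1, c2, j2, c3, j3]) t = j2)).card = 1 := by
        have he : (Finset.univ.filter (fun t => (![c1, c1, c2, j2, c3, j3]) t = j2))
            = {3} := by
          ext t; rw [Finset.mem_filter]; fin_cases t
          · exact iff_of_false (by intro h; exact hj21 h.2.symm) (by decide)
          · exact iff_of_false (by intro h; exact hj21 h.2.symm) (by decide)
          · exact iff_of_false (by intro h; exact h2 h.2) (by decide)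
          · exact iff_of_true ⟨Finset.mem_univ _, rfl⟩ (by decide)
          · exact iff_of_false (by intro h; exact h32 h.2) (by decide)
          · exact iff_of_false (by intro h; exact hj32 h.2) (by decide)
        rw [he]; rfl
      rw [Finset.prod_eq_zero hmem (by rw [hcard]; simpa using gauss_moment_one)]
      simp [h2]
  · have hmem : j1 ∈ Finset.univ.image ![c1, j1, c2, j2, c3, j3] :=
      Finset.mem_image.mpr ⟨1, Finset.mem_univ _, rfl⟩
    have hcard : (Finset.univ.filter
        (fun t => (![c1, j1, c2, j2, c3, j3]) t = j1)).card = 1 := by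
      have he : (Finset.univ.filter (fun t => (![c1, j1, c2, j2, c3, j3]) t = j1))
          = {1} := by
        ext t; rw [Finset.mem_filter]; fin_cases t
        · exact iff_of_false (by intro h; exact h1 h.2) (by decide)
        · exact iff_of_true ⟨Finset.mem_univ _, rfl⟩ (by decide)
        · exact iff_of_false (by intro h; exact h21 h.2) (by decide)
        · exact iff_of_false (by intro h; exact hj21 h.2) (by decide)
        · exact iff_of_false (by intro h; exact h31 h.2) (by decide)
        · exact iff_of_false (by intro h; exact hj31 h.2) (by decide)
      rw [he]; rfl
    rw [Finset.prod_eq_zero hmem (by rw [hcard]; simpa using gauss_moment_one)]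
    simp [h1]

end Indep

end IndepMachinery

section Representation
open Finset
def coordSet (n m p : ℕ) (T : ℕ) : Finset (LDSCoord n m p) :=
  ((Finset.range (T+1) ×ˢ (Finset.univ : Finset (Fin p))).disjSum
    (Finset.range (T+1) ×ˢ (Finset.univ : Finset (Fin n)))).disjSum
  ((Finset.range (T+1) ×ˢ (Finset.univ : Finset (Fin m))).disjSum
    (Finset.univ : Finset (Fin n)))

noncomputable def coefY {n m p : ℕ} (A : Matrix (Fin n) (Fin n) ℝ)
    (B : Matrix (Fin n) (Fin p) ℝ) (C : Matrix (Fin m) (Fin n) ℝ)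
    (D : Matrix (Fin m) (Fin p) ℝ) (T : ℕ) (a : Fin m) : LDSCoord n m p → ℝ :=
  Sum.elim
    (Sum.elim (fun jb => if jb.1 ≤ T then markovParam A B C D (T - jb.1) a jb.2 else 0)
      (fun jc => if jc.1 < T then (C * A ^ (T - 1 - jc.1)) a jc.2 else 0))
    (Sum.elim (fun ja => if ja.1 = T then (if ja.2 = a then 1 else 0) else 0)
      (fun c => (C * A ^ T) a c))

lemma sum_coordSet {n m p : ℕ} (T : ℕ) (F : LDSCoord n m p → ℝ) :
    ∑ i ∈ coordSet n m p T, F i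
      = ((∑ j ∈ Finset.range (T+1), ∑ b, F (Sum.inl (Sum.inl (j, b))))
        + ∑ j ∈ Finset.range (T+1), ∑ c, F (Sum.inl (Sum.inr (j, c))))
        + ((∑ j ∈ Finset.range (T+1), ∑ a, F (Sum.inr (Sum.inl (j, a))))
        + ∑ c, F (Sum.inr (Sum.inr c))) := by
  simp [coordSet, Finset.sum_disjSum, Finset.sum_product]

variable {Ω : Type*} {n m p : ℕ}

lemma repX_vec (A : Matrix (Fin n) (Fin n) ℝ) (B : Matrix (Fin n) (Fin p) ℝ)
    (x : ℕ → Ω → Fin n → ℝ) (u : ℕ → Ω → Fin p → ℝ) (w : ℕ → Ω → Fin n → ℝ)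
    (hx : ∀ t ω, x (t + 1) ω = A.mulVec (x t ω) + B.mulVec (u t ω) + w t ω) :
    ∀ T ω, x T ω = (A ^ T).mulVec (x 0 ω)
      + ∑ j ∈ Finset.range T,
        ((A ^ (T - 1 - j) * B).mulVec (u j ω) + (A ^ (T - 1 - j)).mulVec (w j ω)) := by
  intro T
  induction T with
  | zero => intro ω; simp [Matrix.one_mulVec]
  | succ T ih =>
    intro ω
    have hsum : ∀ (s : Finset ℕ) (v : ℕ → Fin n → ℝ),
        A.mulVec (∑ j ∈ s, v j) = ∑ j ∈ s, A.mulVec (v j) := by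
      intro s v
      exact map_sum A.mulVecLin v s
    rw [hx T ω, ih ω]
    rw [Matrix.mulVec_add, hsum]
    rw [Finset.sum_range_succ]
    have h0 : (T + 1) - 1 - T = 0 := by omega
    have hlast : (A ^ ((T+1) - 1 - T) * B).mulVec (u T ω)
        + (A ^ ((T+1) - 1 - T)).mulVec (w T ω) = B.mulVec (u T ω) + w T ω := by
      rw [h0, pow_zero, Matrix.one_mul, Matrix.one_mulVec]
    rw [hlast]
    have hpow : A.mulVec ((A ^ T).mulVec (x 0 ω)) = (A ^ (T+1)).mulVec (x 0 ω) := by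
      rw [Matrix.mulVec_mulVec, ← pow_succ']
    have hterm : ∀ j ∈ Finset.range T,
        A.mulVec ((A ^ (T - 1 - j) * B).mulVec (u j ω) + (A ^ (T - 1 - j)).mulVec (w j ω))
          = (A ^ ((T+1) - 1 - j) * B).mulVec (u j ω) + (A ^ ((T+1) - 1 - j)).mulVec (w j ω) := by
      intro j hj
      have hj' : j < T := Finset.mem_range.mp hj
      have he : (T+1) - 1 - j = (T - 1 - j) + 1 := by omega
      rw [Matrix.mulVec_add, Matrix.mulVec_mulVec, Matrix.mulVec_mulVec, he, pow_succ',
        Matrix.mul_assoc]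
    rw [Finset.sum_congr rfl hterm] at *
    rw [hpow]
    abel

lemma repY_coord (A : Matrix (Fin n) (Fin n) ℝ) (B : Matrix (Fin n) (Fin p) ℝ)
    (C : Matrix (Fin m) (Fin n) ℝ) (D : Matrix (Fin m) (Fin p) ℝ)
    (x : ℕ → Ω → Fin n → ℝ) (y : ℕ → Ω → Fin m → ℝ)
    (u : ℕ → Ω → Fin p → ℝ) (w : ℕ → Ω → Fin n → ℝ) (z : ℕ → Ω → Fin m → ℝ)
    (hx : ∀ t ω, x (t + 1) ω = A.mulVec (x t ω) + B.mulVec (u t ω) + w t ω)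
    (hy : ∀ t ω, y t ω = C.mulVec (x t ω) + D.mulVec (u t ω) + z t ω) :
    ∀ T ω a, y T ω a = ∑ i ∈ coordSet n m p T,
      coefY A B C D T a i * ldsCoords u w z (x 0) i ω := by
  intro T ω a
  rw [sum_coordSet]
  -- compute the four groups of the RHS
  have hU : ∑ j ∈ Finset.range (T+1), ∑ b,
      coefY A B C D T a (Sum.inl (Sum.inl (j, b)))
        * ldsCoords u w z (x 0) (Sum.inl (Sum.inl (j, b))) ω
      = (∑ j ∈ Finset.range T, ∑ b, (C * A ^ (T - 1 - j) * B) a b * u j ω b)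
        + ∑ b, D a b * u T ω b := by
    rw [Finset.sum_range_succ]
    congr 1
    · refine Finset.sum_congr rfl fun j hj => Finset.sum_congr rfl fun b _ => ?_
      have hj' : j < T := Finset.mem_range.mp hj
      simp only [coefY, Sum.elim_inl, ldsCoords]
      rw [if_pos (by omega : j ≤ T)]
      have : markovParam A B C D (T - j) = C * A ^ (T - 1 - j) * B := by
        rw [markovParam, if_neg (by omega : ¬(T - j = 0)),
          show T - j - 1 = T - 1 - j from by omega]
      rw [this]
    · refine Finset.sum_congr rfl fun b _ => ?_
      simp only [coefY, Sum.elim_inl, ldsCoords]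
      rw [if_pos (le_refl T), Nat.sub_self]
      rw [markovParam, if_pos rfl]
  have hW : ∑ j ∈ Finset.range (T+1), ∑ c,
      coefY A B C D T a (Sum.inl (Sum.inr (j, c)))
        * ldsCoords u w z (x 0) (Sum.inl (Sum.inr (j, c))) ω
      = ∑ j ∈ Finset.range T, ∑ c, (C * A ^ (T - 1 - j)) a c * w j ω c := by
    rw [Finset.sum_range_succ]
    have hlast : ∑ c, coefY A B C D T a (Sum.inl (Sum.inr (T, c)))
        * ldsCoords u w z (x 0) (Sum.inl (Sum.inr (T, c))) ω = 0 := by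
      apply Finset.sum_eq_zero
      intro c _
      simp only [coefY, Sum.elim_inl, Sum.elim_inr]
      rw [if_neg (lt_irrefl T)]
      ring
    rw [hlast, add_zero]
    refine Finset.sum_congr rfl fun j hj => Finset.sum_congr rfl fun c _ => ?_
    have hj' : j < T := Finset.mem_range.mp hj
    simp only [coefY, Sum.elim_inl, Sum.elim_inr, ldsCoords]
    rw [if_pos hj']
  have hZ : ∑ j ∈ Finset.range (T+1), ∑ a',
      coefY A B C D T a (Sum.inr (Sum.inl (j, a')))
        * ldsCoords u w z (x 0) (Sum.inr (Sum.inl (j, a'))) ω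
      = z T ω a := by
    rw [Finset.sum_range_succ]
    have hbefore : ∑ j ∈ Finset.range T, ∑ a',
        coefY A B C D T a (Sum.inr (Sum.inl (j, a')))
          * ldsCoords u w z (x 0) (Sum.inr (Sum.inl (j, a'))) ω = 0 := by
      apply Finset.sum_eq_zero; intro j hj
      apply Finset.sum_eq_zero; intro a' _
      have hj' : j < T := Finset.mem_range.mp hj
      simp only [coefY, Sum.elim_inr, Sum.elim_inl]
      rw [if_neg (by omega : ¬ j = T)]
      ring
    rw [hbefore, zero_add]
    have : ∀ a', coefY A B C D T a (Sum.inr (Sum.inl (T, a')))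
        * ldsCoords u w z (x 0) (Sum.inr (Sum.inl (T, a'))) ω
        = (if a' = a then 1 else 0) * z T ω a' := by
      intro a'
      simp [coefY, ldsCoords]
    simp only [this, ite_mul, one_mul, zero_mul]
    rw [Finset.sum_ite_eq' Finset.univ a (fun a' => z T ω a')]
    simp
  have hX0 : ∑ c, coefY A B C D T a (Sum.inr (Sum.inr c))
      * ldsCoords u w z (x 0) (Sum.inr (Sum.inr c)) ω
      = ∑ c, (C * A ^ T) a c * x 0 ω c := by
    refine Finset.sum_congr rfl fun c _ => ?_
    simp only [coefY, Sum.elim_inr, ldsCoords]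
  rw [hU, hW, hZ, hX0]
  -- now expand the LHS
  rw [hy T ω]
  have hxv := repX_vec A B x u w hx T ω
  have hCx : C.mulVec (x T ω) a
      = (∑ j ∈ Finset.range T, ((C * A ^ (T - 1 - j) * B).mulVec (u j ω) a
          + (C * A ^ (T - 1 - j)).mulVec (w j ω) a))
        + (C * A ^ T).mulVec (x 0 ω) a := by
    rw [hxv]
    have hsum : ∀ (s : Finset ℕ) (v : ℕ → Fin n → ℝ),
        C.mulVec (∑ j ∈ s, v j) = ∑ j ∈ s, C.mulVec (v j) := by
      intro s v
      exact map_sum C.mulVecLin v s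
    rw [Matrix.mulVec_add, hsum]
    rw [Pi.add_apply, Finset.sum_apply]
    have hterm : ∀ j ∈ Finset.range T,
        (C.mulVec ((A ^ (T - 1 - j) * B).mulVec (u j ω) + (A ^ (T - 1 - j)).mulVec (w j ω))) a
        = (C * A ^ (T - 1 - j) * B).mulVec (u j ω) a + (C * A ^ (T - 1 - j)).mulVec (w j ω) a := by
      intro j hj
      rw [Matrix.mulVec_add, Matrix.mulVec_mulVec, Matrix.mulVec_mulVec, Pi.add_apply,
        ← Matrix.mul_assoc]
    rw [Finset.sum_congr rfl hterm, Matrix.mulVec_mulVec]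
    ring
  have hmv : ∀ (M : Matrix (Fin m) (Fin p) ℝ) (v : Fin p → ℝ), M.mulVec v a = ∑ b, M a b * v b := by
    intro M v; rfl
  have hmv' : ∀ (M : Matrix (Fin m) (Fin n) ℝ) (v : Fin n → ℝ), M.mulVec v a = ∑ b, M a b * v b := by
    intro M v; rfl
  rw [Pi.add_apply, Pi.add_apply, hCx]
  rw [hmv D (u T ω), hmv' (C * A ^ T) (x 0 ω)]
  have hsplit : ∑ j ∈ Finset.range T, ((C * A ^ (T - 1 - j) * B).mulVec (u j ω) a
      + (C * A ^ (T - 1 - j)).mulVec (w j ω) a)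
      = (∑ j ∈ Finset.range T, ∑ b, (C * A ^ (T - 1 - j) * B) a b * u j ω b)
        + ∑ j ∈ Finset.range T, ∑ c, (C * A ^ (T - 1 - j)) a c * w j ω c := by
    rw [← Finset.sum_add_distrib]
    refine Finset.sum_congr rfl fun j _ => ?_
    rw [hmv (C * A ^ (T - 1 - j) * B) (u j ω), hmv' (C * A ^ (T - 1 - j)) (w j ω)]
  rw [hsplit]
  ring

end Representation


/-- sixth-moment statistics of a single LDS. With independent
standard Gaussian inputs, noises and initial state,
`E[y_{t+k₁+k₂+k₃+2} ⊗ u_{t+k₁+k₂+2} ⊗ y_{t+k₁+k₂+1} ⊗ u_{t+k₁+1} ⊗ y_{t+k₁} ⊗ u_t]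
 = X_{k₃} ⊗ X_{k₂} ⊗ X_{k₁}` entrywise. -/
theorem lds_sixth_moment {n m p : ℕ}
    {Ω : Type*} [MeasurableSpace Ω] (μ : Measure Ω) [IsProbabilityMeasure μ]
    (A : Matrix (Fin n) (Fin n) ℝ) (B : Matrix (Fin n) (Fin p) ℝ)
    (C : Matrix (Fin m) (Fin n) ℝ) (D : Matrix (Fin m) (Fin p) ℝ)
    (x : ℕ → Ω → Fin n → ℝ) (y : ℕ → Ω → Fin m → ℝ)
    (u : ℕ → Ω → Fin p → ℝ) (w : ℕ → Ω → Fin n → ℝ) (z : ℕ → Ω → Fin m → ℝ)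
    (hx : ∀ t ω, x (t + 1) ω = A.mulVec (x t ω) + B.mulVec (u t ω) + w t ω)
    (hy : ∀ t ω, y t ω = C.mulVec (x t ω) + D.mulVec (u t ω) + z t ω)
    (hmeas : ∀ i, Measurable (ldsCoords u w z (x 0) i))
    -- every coordinate is a standard Gaussian
    (hgauss : ∀ i, μ.map (ldsCoords u w z (x 0) i) = gaussianReal 0 1)
    -- all the coordinates are jointly independent
    (hindep : iIndepFun (ldsCoords u w z (x 0)) μ) :
    ∀ t k₁ k₂ k₃ (a₁ : Fin m) (b₁ : Fin p) (a₂ : Fin m) (b₂ : Fin p)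
      (a₃ : Fin m) (b₃ : Fin p),
      (∫ ω, y (t + k₁ + k₂ + k₃ + 2) ω a₁ * u (t + k₁ + k₂ + 2) ω b₁ *
            y (t + k₁ + k₂ + 1) ω a₂ * u (t + k₁ + 1) ω b₂ *
            y (t + k₁) ω a₃ * u t ω b₃ ∂μ) =
        markovParam A B C D k₃ a₁ b₁ * markovParam A B C D k₂ a₂ b₂ *
          markovParam A B C D k₁ a₃ b₃ := by
  intro t k₁ k₂ k₃ a₁ b₁ a₂ b₂ a₃ b₃
  classical
  -- abbreviations
  let ξ : LDSCoord n m p → Ω → ℝ := ldsCoords u w z (x 0)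
  let S3 := coordSet n m p (t + k₁ + k₂ + k₃ + 2)
  let S2 := coordSet n m p (t + k₁ + k₂ + 1)
  let S1 := coordSet n m p (t + k₁)
  let c1 := coefY A B C D (t + k₁ + k₂ + k₃ + 2) a₁
  let c2 := coefY A B C D (t + k₁ + k₂ + 1) a₂
  let c3 := coefY A B C D (t + k₁) a₃
  let J1 : LDSCoord n m p := Sum.inl (Sum.inl (t + k₁ + k₂ + 2, b₁))
  let J2 : LDSCoord n m p := Sum.inl (Sum.inl (t + k₁ + 1, b₂))
  let J3 : LDSCoord n m p := Sum.inl (Sum.inl (t, b₃))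
  -- distinctness of the three u-coordinates
  have hJ21 : J2 ≠ J1 := by
    simp only [J1, J2, ne_eq, Sum.inl.injEq, Prod.mk.injEq, not_and]
    intro h; omega
  have hJ31 : J3 ≠ J1 := by
    simp only [J1, J3, ne_eq, Sum.inl.injEq, Prod.mk.injEq, not_and]
    intro h; omega
  have hJ32 : J3 ≠ J2 := by
    simp only [J2, J3, ne_eq, Sum.inl.injEq, Prod.mk.injEq, not_and]
    intro h; omega
  -- coordinates appearing in earlier observations differ from later inputs
  have hm2 : ∀ i2 ∈ S2, i2 ≠ J1 := by
    intro i2 hi2 heq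
    rw [heq] at hi2
    simp only [S2, J1, coordSet, Finset.inl_mem_disjSum, Finset.mem_product,
      Finset.mem_range] at hi2
    omega
  have hm3J1 : ∀ i3 ∈ S1, i3 ≠ J1 := by
    intro i3 hi3 heq
    rw [heq] at hi3
    simp only [S1, J1, coordSet, Finset.inl_mem_disjSum, Finset.mem_product,
      Finset.mem_range] at hi3
    omega
  have hm3J2 : ∀ i3 ∈ S1, i3 ≠ J2 := by
    intro i3 hi3 heq
    rw [heq] at hi3
    simp only [S1, J2, coordSet, Finset.inl_mem_disjSum, Finset.mem_product,
      Finset.mem_range] at hi3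
    omega
  -- memberships of the target coordinates
  have hJ1mem : J1 ∈ S3 := by
    simp only [S3, J1, coordSet, Finset.inl_mem_disjSum, Finset.mem_product,
      Finset.mem_range, Finset.mem_univ, and_true]
    omega
  have hJ2mem : J2 ∈ S2 := by
    simp only [S2, J2, coordSet, Finset.inl_mem_disjSum, Finset.mem_product,
      Finset.mem_range, Finset.mem_univ, and_true]
    omega
  have hJ3mem : J3 ∈ S1 := by
    simp only [S1, J3, coordSet, Finset.inl_mem_disjSum, Finset.mem_product,
      Finset.mem_range, Finset.mem_univ, and_true]
    omega
  -- expansion of the integrand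
  have hrepr : ∀ ω, y (t + k₁ + k₂ + k₃ + 2) ω a₁ * u (t + k₁ + k₂ + 2) ω b₁ *
      y (t + k₁ + k₂ + 1) ω a₂ * u (t + k₁ + 1) ω b₂ *
      y (t + k₁) ω a₃ * u t ω b₃
      = ∑ i3 ∈ S1, ∑ i2 ∈ S2, ∑ i1 ∈ S3, (c1 i1 * c2 i2 * c3 i3) *
          (ξ i1 ω * ξ J1 ω * ξ i2 ω * ξ J2 ω * ξ i3 ω * ξ J3 ω) := by
    intro ω
    rw [repY_coord A B C D x y u w z hx hy (t + k₁ + k₂ + k₃ + 2) ω a₁,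
      repY_coord A B C D x y u w z hx hy (t + k₁ + k₂ + 1) ω a₂,
      repY_coord A B C D x y u w z hx hy (t + k₁) ω a₃,
      show u (t + k₁ + k₂ + 2) ω b₁ = ξ J1 ω from rfl,
      show u (t + k₁ + 1) ω b₂ = ξ J2 ω from rfl,
      show u t ω b₃ = ξ J3 ω from rfl]
    simp only [Finset.sum_mul, Finset.mul_sum]
    refine Finset.sum_congr rfl fun i3 _ => ?_
    refine Finset.sum_congr rfl fun i2 _ => ?_
    refine Finset.sum_congr rfl fun i1 _ => ?_
    ring
  -- integrability of each term
  have hInt : ∀ (i1 i2 i3 : LDSCoord n m p), Integrable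
      (fun ω => (c1 i1 * c2 i2 * c3 i3) *
        (ξ i1 ω * ξ J1 ω * ξ i2 ω * ξ J2 ω * ξ i3 ω * ξ J3 ω)) μ := by
    intro i1 i2 i3
    exact (six_integrable hmeas hgauss hindep i1 J1 i2 J2 i3 J3).const_mul _
  -- compute the integral
  have h0 : (∫ ω, y (t + k₁ + k₂ + k₃ + 2) ω a₁ * u (t + k₁ + k₂ + 2) ω b₁ *
        y (t + k₁ + k₂ + 1) ω a₂ * u (t + k₁ + 1) ω b₂ *
        y (t + k₁) ω a₃ * u t ω b₃ ∂μ)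
      = ∑ i3 ∈ S1, ∑ i2 ∈ S2, ∑ i1 ∈ S3,
          (if i1 = J1 then (if i2 = J2 then (if i3 = J3 then
            c1 i1 * c2 i2 * c3 i3 else 0) else 0) else 0) := by
    have he : (∫ ω, y (t + k₁ + k₂ + k₃ + 2) ω a₁ * u (t + k₁ + k₂ + 2) ω b₁ *
          y (t + k₁ + k₂ + 1) ω a₂ * u (t + k₁ + 1) ω b₂ *
          y (t + k₁) ω a₃ * u t ω b₃ ∂μ)
        = ∫ ω, ∑ i3 ∈ S1, ∑ i2 ∈ S2, ∑ i1 ∈ S3, (c1 i1 * c2 i2 * c3 i3) *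
            (ξ i1 ω * ξ J1 ω * ξ i2 ω * ξ J2 ω * ξ i3 ω * ξ J3 ω) ∂μ := by
      congr 1; funext ω; exact hrepr ω
    rw [he, integral_finset_sum _ (fun i3 _ => integrable_finset_sum _
      (fun i2 _ => integrable_finset_sum _ (fun i1 _ => hInt i1 i2 i3)))]
    refine Finset.sum_congr rfl fun i3 hi3 => ?_
    rw [integral_finset_sum _ (fun i2 _ => integrable_finset_sum _
      (fun i1 _ => hInt i1 i2 i3))]
    refine Finset.sum_congr rfl fun i2 hi2 => ?_
    rw [integral_finset_sum _ (fun i1 _ => hInt i1 i2 i3)]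
    refine Finset.sum_congr rfl fun i1 hi1 => ?_
    rw [integral_const_mul, six_integral hmeas hgauss hindep i1 J1 i2 J2 i3 J3
      (hm2 i2 hi2) (hm3J1 i3 hi3) hJ21 (hm3J2 i3 hi3) hJ31 hJ32]
    split_ifs <;> ring
  rw [h0]
  -- collapse the triple sum
  have hcA : ∀ i3 i2, ∑ i1 ∈ S3, (if i1 = J1 then (if i2 = J2 then (if i3 = J3 then
      c1 i1 * c2 i2 * c3 i3 else 0) else 0) else 0)
      = if i2 = J2 then (if i3 = J3 then c1 J1 * c2 i2 * c3 i3 else 0) else 0 := by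
    intro i3 i2
    rw [Finset.sum_ite_eq' S3 J1
      (fun i1 => if i2 = J2 then (if i3 = J3 then c1 i1 * c2 i2 * c3 i3 else 0) else 0),
      if_pos hJ1mem]
  simp only [hcA]
  have hcB : ∀ i3, ∑ i2 ∈ S2, (if i2 = J2 then (if i3 = J3 then
      c1 J1 * c2 i2 * c3 i3 else 0) else 0)
      = if i3 = J3 then c1 J1 * c2 J2 * c3 i3 else 0 := by
    intro i3
    rw [Finset.sum_ite_eq' S2 J2
      (fun i2 => if i3 = J3 then c1 J1 * c2 i2 * c3 i3 else 0), if_pos hJ2mem]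
  simp only [hcB]
  rw [Finset.sum_ite_eq' S1 J3 (fun i3 => c1 J1 * c2 J2 * c3 i3), if_pos hJ3mem]
  -- evaluate the coefficients
  have e1 : c1 J1 = markovParam A B C D k₃ a₁ b₁ := by
    show coefY A B C D (t + k₁ + k₂ + k₃ + 2) a₁ (Sum.inl (Sum.inl (t + k₁ + k₂ + 2, b₁)))
      = markovParam A B C D k₃ a₁ b₁
    simp only [coefY, Sum.elim_inl]
    rw [if_pos (by omega : t + k₁ + k₂ + 2 ≤ t + k₁ + k₂ + k₃ + 2),
      show t + k₁ + k₂ + k₃ + 2 - (t + k₁ + k₂ + 2) = k₃ from by omega]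
  have e2 : c2 J2 = markovParam A B C D k₂ a₂ b₂ := by
    show coefY A B C D (t + k₁ + k₂ + 1) a₂ (Sum.inl (Sum.inl (t + k₁ + 1, b₂)))
      = markovParam A B C D k₂ a₂ b₂
    simp only [coefY, Sum.elim_inl]
    rw [if_pos (by omega : t + k₁ + 1 ≤ t + k₁ + k₂ + 1),
      show t + k₁ + k₂ + 1 - (t + k₁ + 1) = k₂ from by omega]
  have e3 : c3 J3 = markovParam A B C D k₁ a₃ b₃ := by
    show coefY A B C D (t + k₁) a₃ (Sum.inl (Sum.inl (t, b₃)))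
      = markovParam A B C D k₁ a₃ b₃
    simp only [coefY, Sum.elim_inl]
    rw [if_pos (by omega : t ≤ t + k₁),
      show t + k₁ - t = k₁ from by omega]
  rw [e1, e2, e3]
end

section
/- Let x_1, ..., x_r ∈ R^{n1}, y_1, ..., y_r ∈ R^{n2}, z_1, ..., z_r ∈ R^{n3} and suppose {x_i} are linearly independent, {y_i} are linearly independent, and {z_i} are linearly independent. If Σ_{i=1}^r x_i ⊗ y_i ⊗ z_i = Σ_{i=1}^r x'_i ⊗ y'_i ⊗ z'_i where {x'_i}, {y'_i}, {z'_i} are also each linearly independent families, then there exists a permutation π of [r] and scalars a_i, b_i, c_i with a_i b_i c_i = 1 such that x'_{π(i)} = a_i x_i, y'_{π(i)} = b_i y_i, z'_{π(i)} = c_i z_i for all i. In particular the rank-1 terms x_i ⊗ y_i ⊗ z_i are uniquely determined up to permutation. -/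
open Finset

lemma exists_dual_family {n r : ℕ} {v : Fin r → Fin n → ℝ} (hv : LinearIndependent ℝ v) :
    ∃ φ : Fin r → ((Fin n → ℝ) →ₗ[ℝ] ℝ), ∀ i j, φ i (v j) = if i = j then 1 else 0 := by
  set S := Submodule.span ℝ (Set.range v) with hS
  obtain ⟨T, hT⟩ := Submodule.exists_isCompl S
  let b := Module.Basis.span hv
  refine ⟨fun i => (b.coord i).comp (S.linearProjOfIsCompl T hT), fun i j => ?_⟩
  have hmem : v j ∈ S := Submodule.subset_span ⟨j, rfl⟩
  have hproj : S.linearProjOfIsCompl T hT (v j) = ⟨v j, hmem⟩ :=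
    Submodule.linearProjOfIsCompl_apply_left hT ⟨v j, hmem⟩
  have hb : (⟨v j, hmem⟩ : S) = b j := (Module.Basis.span_apply hv j).symm
  simp only [LinearMap.comp_apply, hproj, hb, Module.Basis.coord_apply, Module.Basis.repr_self,
    Finsupp.single_apply]
  simp [eq_comm]

/-- uniqueness of tensor decomposition, Jennrich/Harshman.
If two rank-`r` decompositions with componentwise linearly independent factors
give the same order-3 tensor, the rank-one terms agree up to permutation and
rescaling by scalars whose product is 1. -/
theorem jennrich_uniqueness {n1 n2 n3 r : ℕ}
    (x x' : Fin r → Fin n1 → ℝ) (y y' : Fin r → Fin n2 → ℝ)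
    (z z' : Fin r → Fin n3 → ℝ)
    (hx : LinearIndependent ℝ x) (hy : LinearIndependent ℝ y)
    (hz : LinearIndependent ℝ z)
    (hx' : LinearIndependent ℝ x') (hy' : LinearIndependent ℝ y')
    (hz' : LinearIndependent ℝ z')
    (heq : ∀ (a : Fin n1) (b : Fin n2) (c : Fin n3),
      (∑ i, x i a * y i b * z i c) = ∑ i, x' i a * y' i b * z' i c) :
    ∃ (π : Equiv.Perm (Fin r)) (a b c : Fin r → ℝ),
      ∀ i, a i * b i * c i = 1 ∧
        x' (π i) = a i • x i ∧ y' (π i) = b i • y i ∧ z' (π i) = c i • z i := by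
  classical
  obtain ⟨φ, hφ⟩ := exists_dual_family hx
  obtain ⟨ψ, hψ⟩ := exists_dual_family hy
  obtain ⟨χ, hχ⟩ := exists_dual_family hz
  obtain ⟨φ', hφ'⟩ := exists_dual_family hx'
  obtain ⟨ψ', hψ'⟩ := exists_dual_family hy'
  obtain ⟨χ', hχ'⟩ := exists_dual_family hz'
  -- vector forms of the tensor identity
  have hv1 : ∀ (q : Fin n2) (s : Fin n3),
      (∑ i, (y i q * z i s) • x i) = ∑ j, (y' j q * z' j s) • x' j := by
    intro q s
    funext p
    simp only [Finset.sum_apply, Pi.smul_apply, smul_eq_mul]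
    calc ∑ i, (y i q * z i s) * x i p
        = ∑ i, x i p * y i q * z i s := Finset.sum_congr rfl fun i _ => by ring
      _ = ∑ j, x' j p * y' j q * z' j s := heq p q s
      _ = ∑ j, (y' j q * z' j s) * x' j p := Finset.sum_congr rfl fun j _ => by ring
  have hv3 : ∀ (p : Fin n1) (q : Fin n2),
      (∑ i, (x i p * y i q) • z i) = ∑ j, (x' j p * y' j q) • z' j := by
    intro p q
    funext s
    simp only [Finset.sum_apply, Pi.smul_apply, smul_eq_mul]
    exact heq p q s
  -- apply φ a to hv1
  have hk1 : ∀ (a : Fin r) q s, y a q * z a s = ∑ j, (y' j q * z' j s) * φ a (x' j) := by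
    intro a q s
    have h := congrArg (φ a) (hv1 q s)
    simpa [map_sum, map_smul, smul_eq_mul, hφ, mul_ite, Finset.sum_ite_eq] using h
  -- vector form in slot 2
  have hv2 : ∀ (a : Fin r) s, (z a s) • y a = ∑ j, (z' j s * φ a (x' j)) • y' j := by
    intro a s
    funext q
    simp only [Finset.sum_apply, Pi.smul_apply, smul_eq_mul]
    calc z a s * y a q = y a q * z a s := by ring
      _ = ∑ j, (y' j q * z' j s) * φ a (x' j) := hk1 a q s
      _ = ∑ j, (z' j s * φ a (x' j)) * y' j q := Finset.sum_congr rfl fun j _ => by ring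
  -- apply ψ b : key identity
  have hk2 : ∀ (a b : Fin r) s,
      (if b = a then z a s else 0) = ∑ j, (φ a (x' j) * ψ b (y' j)) * z' j s := by
    intro a b s
    have h := congrArg (ψ b) (hv2 a s)
    simp only [map_sum, map_smul, smul_eq_mul, hψ] at h
    calc (if b = a then z a s else 0) = z a s * (if b = a then 1 else 0) := by
          split <;> ring
      _ = ∑ j, z' j s * φ a (x' j) * ψ b (y' j) := h
      _ = ∑ j, (φ a (x' j) * ψ b (y' j)) * z' j s := Finset.sum_congr rfl fun j _ => by ring
  have hD1 : ∀ (a b : Fin r),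
      (if b = a then (1:ℝ) else 0) • z a = ∑ j, (φ a (x' j) * ψ b (y' j)) • z' j := by
    intro a b
    funext s
    simp only [Finset.sum_apply, Pi.smul_apply, smul_eq_mul]
    calc (if b = a then (1:ℝ) else 0) * z a s = (if b = a then z a s else 0) := by
          split <;> ring
      _ = ∑ j, (φ a (x' j) * ψ b (y' j)) * z' j s := hk2 a b s
  have h0 : ∀ (a b : Fin r), b ≠ a → ∀ j, φ a (x' j) * ψ b (y' j) = 0 := by
    intro a b hne j
    have h := hD1 a b
    rw [if_neg hne, zero_smul] at h
    exact Fintype.linearIndependent_iff.mp hz' _ h.symm j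
  have hdiag : ∀ (a c : Fin r),
      (if c = a then (1:ℝ) else 0) = ∑ j, φ a (x' j) * ψ a (y' j) * χ c (z' j) := by
    intro a c
    have h := hD1 a a
    rw [if_pos rfl, one_smul] at h
    have h2 := congrArg (χ c) h
    simpa [map_sum, map_smul, smul_eq_mul, hχ, mul_assoc] using h2
  -- expansions of primed vectors in unprimed bases
  have hS3 : ∀ (c : Fin r) p q, (∑ i, (x i p * y i q) * χ' c (z i)) = x' c p * y' c q := by
    intro c p q
    have h := congrArg (χ' c) (hv3 p q)
    simpa [map_sum, map_smul, smul_eq_mul, hχ', mul_ite, Finset.sum_ite_eq] using h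
  have hv4 : ∀ (c : Fin r) p, (∑ i, (x i p * χ' c (z i)) • y i) = (x' c p) • y' c := by
    intro c p
    funext q
    simp only [Finset.sum_apply, Pi.smul_apply, smul_eq_mul]
    calc ∑ i, (x i p * χ' c (z i)) * y i q
        = ∑ i, (x i p * y i q) * χ' c (z i) := Finset.sum_congr rfl fun i _ => by ring
      _ = x' c p * y' c q := hS3 c p q
  have hk4 : ∀ (c : Fin r) p, (∑ i, (x i p * χ' c (z i)) * ψ' c (y i)) = x' c p := by
    intro c p
    have h := congrArg (ψ' c) (hv4 c p)
    simpa [map_sum, map_smul, smul_eq_mul, hψ'] using h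
  have hxexp0 : ∀ c : Fin r, x' c = ∑ i, (χ' c (z i) * ψ' c (y i)) • x i := by
    intro c
    funext p
    simp only [Finset.sum_apply, Pi.smul_apply, smul_eq_mul]
    calc x' c p = ∑ i, (x i p * χ' c (z i)) * ψ' c (y i) := (hk4 c p).symm
      _ = ∑ i, (χ' c (z i) * ψ' c (y i)) * x i p := Finset.sum_congr rfl fun i _ => by ring
  have hAexp : ∀ c : Fin r, x' c = ∑ a, φ a (x' c) • x a := by
    intro c
    have h2 : ∀ a, φ a (x' c) = χ' c (z a) * ψ' c (y a) := by
      intro a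
      have h := congrArg (φ a) (hxexp0 c)
      simpa [map_sum, map_smul, smul_eq_mul, hφ, mul_ite, Finset.sum_ite_eq] using h
    calc x' c = ∑ i, (χ' c (z i) * ψ' c (y i)) • x i := hxexp0 c
      _ = ∑ a, φ a (x' c) • x a := Finset.sum_congr rfl fun a _ => by rw [h2 a]
  -- y' expansion
  have hv5 : ∀ (c : Fin r) q, (∑ i, (y i q * χ' c (z i)) • x i) = (y' c q) • x' c := by
    intro c q
    funext p
    simp only [Finset.sum_apply, Pi.smul_apply, smul_eq_mul]
    calc ∑ i, (y i q * χ' c (z i)) * x i p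
        = ∑ i, (x i p * y i q) * χ' c (z i) := Finset.sum_congr rfl fun i _ => by ring
      _ = x' c p * y' c q := hS3 c p q
      _ = y' c q * x' c p := by ring
  have hk5 : ∀ (c : Fin r) q, (∑ i, (y i q * χ' c (z i)) * φ' c (x i)) = y' c q := by
    intro c q
    have h := congrArg (φ' c) (hv5 c q)
    simpa [map_sum, map_smul, smul_eq_mul, hφ'] using h
  have hyexp0 : ∀ c : Fin r, y' c = ∑ i, (χ' c (z i) * φ' c (x i)) • y i := by
    intro c
    funext q
    simp only [Finset.sum_apply, Pi.smul_apply, smul_eq_mul]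
    calc y' c q = ∑ i, (y i q * χ' c (z i)) * φ' c (x i) := (hk5 c q).symm
      _ = ∑ i, (χ' c (z i) * φ' c (x i)) * y i q := Finset.sum_congr rfl fun i _ => by ring
  have hBexp : ∀ c : Fin r, y' c = ∑ b, ψ b (y' c) • y b := by
    intro c
    have h2 : ∀ b, ψ b (y' c) = χ' c (z b) * φ' c (x b) := by
      intro b
      have h := congrArg (ψ b) (hyexp0 c)
      simpa [map_sum, map_smul, smul_eq_mul, hψ, mul_ite, Finset.sum_ite_eq] using h
    calc y' c = ∑ i, (χ' c (z i) * φ' c (x i)) • y i := hyexp0 c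
      _ = ∑ b, ψ b (y' c) • y b := Finset.sum_congr rfl fun b _ => by rw [h2 b]
  -- z' expansion
  have hS1 : ∀ (c : Fin r) q s, (∑ i, (y i q * z i s) * φ' c (x i)) = y' c q * z' c s := by
    intro c q s
    have h := congrArg (φ' c) (hv1 q s)
    simpa [map_sum, map_smul, smul_eq_mul, hφ', mul_ite, Finset.sum_ite_eq] using h
  have hv6 : ∀ (c : Fin r) s, (∑ i, (z i s * φ' c (x i)) • y i) = (z' c s) • y' c := by
    intro c s
    funext q
    simp only [Finset.sum_apply, Pi.smul_apply, smul_eq_mul]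
    calc ∑ i, (z i s * φ' c (x i)) * y i q
        = ∑ i, (y i q * z i s) * φ' c (x i) := Finset.sum_congr rfl fun i _ => by ring
      _ = y' c q * z' c s := hS1 c q s
      _ = z' c s * y' c q := by ring
  have hk6 : ∀ (c : Fin r) s, (∑ i, (z i s * φ' c (x i)) * ψ' c (y i)) = z' c s := by
    intro c s
    have h := congrArg (ψ' c) (hv6 c s)
    simpa [map_sum, map_smul, smul_eq_mul, hψ'] using h
  have hzexp0 : ∀ c : Fin r, z' c = ∑ i, (φ' c (x i) * ψ' c (y i)) • z i := by
    intro c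
    funext s
    simp only [Finset.sum_apply, Pi.smul_apply, smul_eq_mul]
    calc z' c s = ∑ i, (z i s * φ' c (x i)) * ψ' c (y i) := (hk6 c s).symm
      _ = ∑ i, (φ' c (x i) * ψ' c (y i)) * z i s := Finset.sum_congr rfl fun i _ => by ring
  have hCexp : ∀ c : Fin r, z' c = ∑ d, χ d (z' c) • z d := by
    intro c
    have h2 : ∀ d, χ d (z' c) = φ' c (x d) * ψ' c (y d) := by
      intro d
      have h := congrArg (χ d) (hzexp0 c)
      simpa [map_sum, map_smul, smul_eq_mul, hχ, mul_ite, Finset.sum_ite_eq] using h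
    calc z' c = ∑ i, (φ' c (x i) * ψ' c (y i)) • z i := hzexp0 c
      _ = ∑ d, χ d (z' c) • z d := Finset.sum_congr rfl fun d _ => by rw [h2 d]
  -- nonzero rows
  have hArow : ∀ j, ∃ a, φ a (x' j) ≠ 0 := by
    intro j
    by_contra h
    push_neg at h
    have : x' j = 0 := by
      rw [hAexp j]
      simp [h]
    exact hx'.ne_zero j this
  have hBrow : ∀ j, ∃ b, ψ b (y' j) ≠ 0 := by
    intro j
    by_contra h
    push_neg at h
    have : y' j = 0 := by
      rw [hBexp j]
      simp [h]
    exact hy'.ne_zero j this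
  set σ : Fin r → Fin r := fun j => (hArow j).choose with hσdef
  have hσ : ∀ j, φ (σ j) (x' j) ≠ 0 := fun j => (hArow j).choose_spec
  have hB0 : ∀ j b, b ≠ σ j → ψ b (y' j) = 0 := by
    intro j b hb
    rcases mul_eq_zero.mp (h0 (σ j) b hb j) with h | h
    · exact absurd h (hσ j)
    · exact h
  have hBσ : ∀ j, ψ (σ j) (y' j) ≠ 0 := by
    intro j
    obtain ⟨b, hb⟩ := hBrow j
    by_cases hbs : b = σ j
    · rwa [hbs] at hb
    · exact absurd (hB0 j b hbs) hb
  have hA0 : ∀ j a, a ≠ σ j → φ a (x' j) = 0 := by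
    intro j a ha
    rcases mul_eq_zero.mp (h0 a (σ j) (Ne.symm ha) j) with h | h
    · exact h
    · exact absurd h (hBσ j)
  have hxj : ∀ j, x' j = φ (σ j) (x' j) • x (σ j) := by
    intro j
    calc x' j = ∑ a, φ a (x' j) • x a := hAexp j
      _ = φ (σ j) (x' j) • x (σ j) :=
        Finset.sum_eq_single_of_mem (σ j) (mem_univ _)
          (fun a _ ha => by rw [hA0 j a ha, zero_smul])
  have hyj : ∀ j, y' j = ψ (σ j) (y' j) • y (σ j) := by
    intro j
    calc y' j = ∑ b, ψ b (y' j) • y b := hBexp j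
      _ = ψ (σ j) (y' j) • y (σ j) :=
        Finset.sum_eq_single_of_mem (σ j) (mem_univ _)
          (fun b _ hb => by rw [hB0 j b hb, zero_smul])
  -- injectivity of σ
  have hinj : Function.Injective σ := by
    intro j k hjk
    by_contra hne
    set g : Fin r → ℝ := fun i =>
      if i = j then φ (σ k) (x' k) else if i = k then -(φ (σ j) (x' j)) else 0 with hg
    have hsum : ∑ i, g i • x' i = 0 := by
      have hsub : ∑ i, g i • x' i = ∑ i ∈ ({j, k} : Finset (Fin r)), g i • x' i := by
        refine (Finset.sum_subset (Finset.subset_univ _) ?_).symm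
        intro i _ hi
        simp only [Finset.mem_insert, Finset.mem_singleton, not_or] at hi
        simp [hg, hi.1, hi.2]
      rw [hsub, Finset.sum_pair hne]
      have hgj : g j = φ (σ k) (x' k) := by simp [hg]
      have hgk : g k = -(φ (σ j) (x' j)) := by simp [hg, Ne.symm hne]
      rw [hgj, hgk]
      have e1 : x' j = φ (σ j) (x' j) • x (σ k) := by rw [← hjk]; exact hxj j
      have e2 : x' k = φ (σ k) (x' k) • x (σ k) := hxj k
      calc φ (σ k) (x' k) • x' j + -(φ (σ j) (x' j)) • x' k
          = φ (σ k) (x' k) • (φ (σ j) (x' j) • x (σ k))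
            + -(φ (σ j) (x' j)) • (φ (σ k) (x' k) • x (σ k)) := by rw [← e1, ← e2]
        _ = (φ (σ k) (x' k) * φ (σ j) (x' j)
            + -(φ (σ j) (x' j)) * φ (σ k) (x' k)) • x (σ k) := by
              rw [smul_smul, smul_smul, ← add_smul]
        _ = 0 := by
              have h9 : φ (σ k) (x' k) * φ (σ j) (x' j)
                  + -(φ (σ j) (x' j)) * φ (σ k) (x' k) = 0 := by ring
              rw [h9, zero_smul]
    have hgj0 := Fintype.linearIndependent_iff.mp hx' g hsum j
    rw [hg] at hgj0
    simp only [if_pos rfl] at hgj0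
    exact hσ k hgj0
  have hbij : Function.Bijective σ := Finite.injective_iff_bijective.mp hinj
  set e : Equiv.Perm (Fin r) := Equiv.ofBijective σ hbij with he
  have heapp : ∀ j, e j = σ j := fun j => rfl
  -- collapse the diagonal identity
  have hsingle : ∀ j c, (if c = σ j then (1:ℝ) else 0)
      = φ (σ j) (x' j) * ψ (σ j) (y' j) * χ c (z' j) := by
    intro j c
    calc (if c = σ j then (1:ℝ) else 0)
        = ∑ j', φ (σ j) (x' j') * ψ (σ j) (y' j') * χ c (z' j') := hdiag (σ j) c
      _ = φ (σ j) (x' j) * ψ (σ j) (y' j) * χ c (z' j) :=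
        Finset.sum_eq_single_of_mem j (mem_univ _) (fun j' _ hj' => by
          rw [hA0 j' (σ j) (fun h => hj' (hinj h.symm)), zero_mul, zero_mul])
  have hC0 : ∀ j c, c ≠ σ j → χ c (z' j) = 0 := by
    intro j c hc
    have h := hsingle j c
    rw [if_neg hc] at h
    rcases mul_eq_zero.mp h.symm with h' | h'
    · rcases mul_eq_zero.mp h' with h'' | h''
      · exact absurd h'' (hσ j)
      · exact absurd h'' (hBσ j)
    · exact h'
  have hprod : ∀ j, φ (σ j) (x' j) * ψ (σ j) (y' j) * χ (σ j) (z' j) = 1 := by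
    intro j
    have h := hsingle j (σ j)
    rw [if_pos rfl] at h
    exact h.symm
  have hzj : ∀ j, z' j = χ (σ j) (z' j) • z (σ j) := by
    intro j
    calc z' j = ∑ d, χ d (z' j) • z d := hCexp j
      _ = χ (σ j) (z' j) • z (σ j) :=
        Finset.sum_eq_single_of_mem (σ j) (mem_univ _)
          (fun d _ hd => by rw [hC0 j d hd, zero_smul])
  refine ⟨e.symm, fun i => φ i (x' (e.symm i)), fun i => ψ i (y' (e.symm i)),
    fun i => χ i (z' (e.symm i)), fun i => ?_⟩
  have hsj : σ (e.symm i) = i := by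
    rw [← heapp (e.symm i)]
    exact e.apply_symm_apply i
  refine ⟨?_, ?_, ?_, ?_⟩
  · have := hprod (e.symm i); rwa [hsj] at this
  · have := hxj (e.symm i); rwa [hsj] at this
  · have := hyj (e.symm i); rwa [hsj] at this
  · have := hzj (e.symm i); rwa [hsj] at this
end

section
/- Let A ∈ R^{n×n}, B ∈ R^{n×p}, C ∈ R^{m×n} with the observability matrix O_s = [C; CA; ...; CA^{s-1}] of full column rank n and the controllability matrix Q_s = [B, AB, ..., A^{s-1}B] of full row rank n. Let H ∈ R^{ms×p(s+1)} be the Hankel matrix with (i,j) block C A^{i+j-2} B, let H^- be its first ps columns and H^+ its last ps columns, and let H^- = U Σ V^T be a compact rank-n SVD. Set Ô = U Σ^{1/2}, Q̂ = Σ^{1/2} V^T, and Â = Ô^† H^+ Q̂^†. Then there exists an invertible matrix T ∈ R^{n×n} such that Â = T^{-1} A T, the first m rows of Ô equal C T, and the first p columns of Q̂ equal T^{-1} B. -/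
open Finset Matrix

/-- Moore–Penrose pseudoinverse of a matrix with full column rank:
`M† = (Mᵀ M)⁻¹ Mᵀ`. -/
noncomputable def pinvCol {d e : Type*} [Fintype d] [Fintype e] [DecidableEq e]
    (M : Matrix d e ℝ) : Matrix e d ℝ :=
  (Mᵀ * M)⁻¹ * Mᵀ

/-- Moore–Penrose pseudoinverse of a matrix with full row rank:
`M† = Mᵀ (M Mᵀ)⁻¹`. -/
noncomputable def pinvRow {d e : Type*} [Fintype d] [Fintype e] [DecidableEq d]
    (M : Matrix d e ℝ) : Matrix e d ℝ :=
  Mᵀ * (M * Mᵀ)⁻¹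

/-- exact correctness of the Ho-Kalman algorithm.
From the exact Hankel matrix of Markov parameters and a compact rank-`n`
SVD `H⁻ = U Σ Vᵀ`, setting `Ô = U Σ^{1/2}`, `Q̂ = Σ^{1/2} Vᵀ` and
`Â = Ô† H⁺ Q̂†`, there is an invertible `T` with `Â = T⁻¹ A T`, the first `m`
rows of `Ô` equal `C T`, and the first `p` columns of `Q̂` equal `T⁻¹ B`. -/
theorem ho_kalman_exact {n m p s : ℕ} (hs : 0 < s)
    (A : Matrix (Fin n) (Fin n) ℝ) (B : Matrix (Fin n) (Fin p) ℝ)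
    (C : Matrix (Fin m) (Fin n) ℝ)
    (Os : Matrix (Fin s × Fin m) (Fin n) ℝ)
    (Qs : Matrix (Fin n) (Fin s × Fin p) ℝ)
    (hOs : ∀ (i : Fin s) (a : Fin m) (j : Fin n), Os (i, a) j = (C * A ^ (i : ℕ)) a j)
    (hQs : ∀ (j : Fin n) (i : Fin s) (b : Fin p), Qs j (i, b) = (A ^ (i : ℕ) * B) j b)
    (hrankO : Os.rank = n) (hrankQ : Qs.rank = n)
    (Hminus Hplus : Matrix (Fin s × Fin m) (Fin s × Fin p) ℝ)
    (hHminus : ∀ (i : Fin s) (a : Fin m) (j : Fin s) (b : Fin p),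
      Hminus (i, a) (j, b) = (C * A ^ ((i : ℕ) + (j : ℕ)) * B) a b)
    (hHplus : ∀ (i : Fin s) (a : Fin m) (j : Fin s) (b : Fin p),
      Hplus (i, a) (j, b) = (C * A ^ ((i : ℕ) + (j : ℕ) + 1) * B) a b)
    -- compact rank-`n` SVD of `H⁻`
    (U : Matrix (Fin s × Fin m) (Fin n) ℝ) (σ : Fin n → ℝ)
    (V : Matrix (Fin s × Fin p) (Fin n) ℝ)
    (hU : Uᵀ * U = 1) (hV : Vᵀ * V = 1) (hσ : ∀ i, 0 < σ i)
    (hSVD : Hminus = U * Matrix.diagonal σ * Vᵀ)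
    (Ohat : Matrix (Fin s × Fin m) (Fin n) ℝ)
    (Qhat : Matrix (Fin n) (Fin s × Fin p) ℝ)
    (Ahat : Matrix (Fin n) (Fin n) ℝ)
    (hOhat : Ohat = U * Matrix.diagonal (fun i => Real.sqrt (σ i)))
    (hQhat : Qhat = Matrix.diagonal (fun i => Real.sqrt (σ i)) * Vᵀ)
    (hAhat : Ahat = pinvCol Ohat * Hplus * pinvRow Qhat) :
    ∃ T : Matrix (Fin n) (Fin n) ℝ, IsUnit T.det ∧
      Ahat = T⁻¹ * A * T ∧
      (∀ (a : Fin m) (j : Fin n), Ohat (⟨0, hs⟩, a) j = (C * T) a j) ∧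
      (∀ (j : Fin n) (b : Fin p), Qhat j (⟨0, hs⟩, b) = (T⁻¹ * B) j b) := by
  classical
  set D : Matrix (Fin n) (Fin n) ℝ := Matrix.diagonal (fun i => Real.sqrt (σ i)) with hDdef
  set Di : Matrix (Fin n) (Fin n) ℝ := Matrix.diagonal (fun i => (Real.sqrt (σ i))⁻¹) with hDidef
  have hsqne : ∀ i, Real.sqrt (σ i) ≠ 0 := fun i => (Real.sqrt_pos.2 (hσ i)).ne'
  have hDDi : D * Di = 1 := by
    rw [hDdef, hDidef, Matrix.diagonal_mul_diagonal]
    have h : (fun i => Real.sqrt (σ i) * (Real.sqrt (σ i))⁻¹) = fun _ : Fin n => (1 : ℝ) :=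
      funext fun i => mul_inv_cancel₀ (hsqne i)
    rw [h, Matrix.diagonal_one]
  have hDiD : Di * D = 1 := by
    rw [hDdef, hDidef, Matrix.diagonal_mul_diagonal]
    have h : (fun i => (Real.sqrt (σ i))⁻¹ * Real.sqrt (σ i)) = fun _ : Fin n => (1 : ℝ) :=
      funext fun i => inv_mul_cancel₀ (hsqne i)
    rw [h, Matrix.diagonal_one]
  have hDD : D * D = Matrix.diagonal σ := by
    rw [hDdef, Matrix.diagonal_mul_diagonal]
    have h : (fun i => Real.sqrt (σ i) * Real.sqrt (σ i)) = σ :=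
      funext fun i => Real.mul_self_sqrt (hσ i).le
    rw [h]
  have hDt : Dᵀ = D := Matrix.diagonal_transpose _
  -- Hankel factorizations
  have hHm : Hminus = Os * Qs := by
    ext ⟨i, a⟩ ⟨j, b⟩
    have e : C * A ^ ((i : ℕ) + (j : ℕ)) * B = (C * A ^ (i : ℕ)) * (A ^ (j : ℕ) * B) := by
      rw [pow_add]; simp only [Matrix.mul_assoc]
    conv_rhs => rw [Matrix.mul_apply]
    simp only [hOs, hQs]
    rw [hHminus, e]
    conv_lhs => rw [Matrix.mul_apply]
  have hAQ : ∀ (k : Fin n) (j : Fin s) (b : Fin p),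
      (A * Qs) k (j, b) = (A ^ ((j : ℕ) + 1) * B) k b := by
    intro k j b
    have e : A ^ ((j : ℕ) + 1) * B = A * (A ^ (j : ℕ) * B) := by
      rw [pow_succ']; simp only [Matrix.mul_assoc]
    conv_lhs => rw [Matrix.mul_apply]
    simp only [hQs]
    rw [e]
    conv_rhs => rw [Matrix.mul_apply]
  have hHp : Hplus = Os * (A * Qs) := by
    ext ⟨i, a⟩ ⟨j, b⟩
    have e : C * A ^ ((i : ℕ) + (j : ℕ) + 1) * B
        = (C * A ^ (i : ℕ)) * (A ^ ((j : ℕ) + 1) * B) := by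
      rw [Nat.add_assoc, pow_add]; simp only [Matrix.mul_assoc]
    conv_rhs => rw [Matrix.mul_apply]
    simp only [hOs, hAQ]
    rw [hHplus, e]
    conv_lhs => rw [Matrix.mul_apply]
  -- pseudoinverses
  have hOtO : Ohatᵀ * Ohat = Matrix.diagonal σ := by
    rw [hOhat, Matrix.transpose_mul, hDt]
    calc D * Uᵀ * (U * D) = D * ((Uᵀ * U) * D) := by simp only [Matrix.mul_assoc]
    _ = Matrix.diagonal σ := by rw [hU, Matrix.one_mul, hDD]
  have hQQt : Qhat * Qhatᵀ = Matrix.diagonal σ := by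
    rw [hQhat, Matrix.transpose_mul, Matrix.transpose_transpose, hDt]
    calc D * Vᵀ * (V * D) = D * ((Vᵀ * V) * D) := by simp only [Matrix.mul_assoc]
    _ = Matrix.diagonal σ := by rw [hV, Matrix.one_mul, hDD]
  have hdiaginv : (Matrix.diagonal σ)⁻¹ = Di * Di := by
    apply Matrix.inv_eq_right_inv
    calc Matrix.diagonal σ * (Di * Di) = D * ((D * Di) * Di) := by
          rw [← hDD]; simp only [Matrix.mul_assoc]
    _ = 1 := by rw [hDDi, Matrix.one_mul, hDDi]
  have hpinvO : pinvCol Ohat = Di * Uᵀ := by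
    rw [pinvCol, hOtO, hdiaginv, hOhat, Matrix.transpose_mul, hDt]
    calc Di * Di * (D * Uᵀ) = Di * ((Di * D) * Uᵀ) := by simp only [Matrix.mul_assoc]
    _ = Di * Uᵀ := by rw [hDiD, Matrix.one_mul]
  have hpinvQ : pinvRow Qhat = V * Di := by
    rw [pinvRow, hQQt, hdiaginv, hQhat, Matrix.transpose_mul, Matrix.transpose_transpose, hDt]
    calc V * D * (Di * Di) = V * ((D * Di) * Di) := by simp only [Matrix.mul_assoc]
    _ = V * Di := by rw [hDDi, Matrix.one_mul]
  -- the similarity transform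
  set T : Matrix (Fin n) (Fin n) ℝ := Qs * V * Di with hTdef
  set S : Matrix (Fin n) (Fin n) ℝ := Di * Uᵀ * Os with hSdef
  have hOsQs : Uᵀ * (Os * Qs) * V = Matrix.diagonal σ := by
    rw [← hHm, hSVD]
    calc Uᵀ * (U * Matrix.diagonal σ * Vᵀ) * V
        = (Uᵀ * U) * (Matrix.diagonal σ * (Vᵀ * V)) := by simp only [Matrix.mul_assoc]
    _ = Matrix.diagonal σ := by rw [hU, hV, Matrix.one_mul, Matrix.mul_one]
  have hST : S * T = 1 := by
    rw [hSdef, hTdef]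
    calc Di * Uᵀ * Os * (Qs * V * Di)
        = Di * ((Uᵀ * (Os * Qs) * V) * Di) := by simp only [Matrix.mul_assoc]
    _ = Di * ((D * D) * Di) := by rw [hOsQs, hDD]
    _ = (Di * D) * (D * Di) := by simp only [Matrix.mul_assoc]
    _ = 1 := by rw [hDiD, hDDi, Matrix.one_mul]
  have hTinv : T⁻¹ = S := Matrix.inv_eq_left_inv hST
  have hdetT : IsUnit T.det := by
    have h : T.det * S.det = 1 := by
      rw [mul_comm, ← Matrix.det_mul, hST, Matrix.det_one]
    exact IsUnit.of_mul_eq_one _ h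
  -- Ohat = Os * T and Qhat = S * Qs
  have hOsT : Ohat = Os * T := by
    rw [hOhat, hTdef]
    have h : Os * (Qs * V * Di) = U * D := by
      calc Os * (Qs * V * Di) = (Os * Qs) * (V * Di) := by simp only [Matrix.mul_assoc]
      _ = U * (Matrix.diagonal σ * ((Vᵀ * V) * Di)) := by
            rw [← hHm, hSVD]; simp only [Matrix.mul_assoc]
      _ = U * (D * (D * Di)) := by rw [hV, Matrix.one_mul, ← hDD]; simp only [Matrix.mul_assoc]
      _ = U * D := by rw [hDDi, Matrix.mul_one]
    exact h.symm
  have hSQs : Qhat = S * Qs := by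
    rw [hQhat, hSdef]
    have h : Di * Uᵀ * Os * Qs = D * Vᵀ := by
      calc Di * Uᵀ * Os * Qs = Di * (Uᵀ * (Os * Qs)) := by simp only [Matrix.mul_assoc]
      _ = Di * ((Uᵀ * U) * (Matrix.diagonal σ * Vᵀ)) := by
            rw [← hHm, hSVD]; simp only [Matrix.mul_assoc]
      _ = ((Di * D) * D) * Vᵀ := by rw [hU, Matrix.one_mul, ← hDD]; simp only [Matrix.mul_assoc]
      _ = D * Vᵀ := by rw [hDiD, Matrix.one_mul]
    exact h.symm
  refine ⟨T, hdetT, ?_, ?_, ?_⟩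
  · rw [hAhat, hpinvO, hpinvQ, hHp, hTinv, hSdef, hTdef]
    simp only [Matrix.mul_assoc]
  · intro a j
    rw [hOsT]
    have h : ∀ (k : Fin n), Os (⟨0, hs⟩, a) k = C a k := by
      intro k; rw [hOs]; simp
    simp [Matrix.mul_apply, h]
  · intro j b
    rw [hSQs, hTinv, hSdef]
    have h : ∀ (k : Fin n), Qs k (⟨0, hs⟩, b) = B k b := by
      intro k; rw [hQs]; simp
    simp [Matrix.mul_apply, h]
end

section
/- Let g ∈ R^d with 1 ≤ ‖g‖ ≤ M, let w ∈ (0, 1], and suppose v ∈ R^d satisfies ‖v − w · ‖g‖^2 · g‖ ≤ ε for some 0 ≤ ε ≤ w/2 (so that in particular |‖v‖ − w‖g‖^3| ≤ ε). Then ‖ v / ‖v‖^{2/3} − w^{1/3} g ‖ ≤ C · ε · poly(M, 1/w) for an absolute constant C; concretely, ‖ v/‖v‖^{2/3} − w^{1/3} g ‖ ≤ 10 ε M^3 / w. -/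
open Finset

/-- Euclidean norm of a vector. -/
noncomputable def eNorm {d : ℕ} (v : Fin d → ℝ) : ℝ :=
  Real.sqrt (∑ i, (v i) ^ 2)

set_option maxHeartbeats 1000000

noncomputable def toE (d : ℕ) : (Fin d → ℝ) ≃ₗ[ℝ] EuclideanSpace ℝ (Fin d) :=
  (WithLp.linearEquiv 2 ℝ (Fin d → ℝ)).symm

lemma eNorm_eq_norm {d : ℕ} (x : Fin d → ℝ) : eNorm x = ‖toE d x‖ := by
  rw [EuclideanSpace.norm_eq, eNorm]
  refine congrArg Real.sqrt (Finset.sum_congr rfl fun i _ => ?_)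
  have h : (toE d x) i = x i := rfl
  rw [h, Real.norm_eq_abs, sq_abs]

theorem key_lemma {E : Type*} [NormedAddCommGroup E] [NormedSpace ℝ E]
    (M w ε : ℝ) (g v : E)
    (hglb : 1 ≤ ‖g‖) (hgub : ‖g‖ ≤ M) (hw0 : 0 < w) (hw1 : w ≤ 1)
    (hε0 : 0 ≤ ε) (hεw : ε ≤ w / 2)
    (hv : ‖v - (w * ‖g‖ ^ 2) • g‖ ≤ ε) :
    ‖((‖v‖ : ℝ) ^ ((2 : ℝ) / 3))⁻¹ • v - (w ^ ((1 : ℝ) / 3)) • g‖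
      ≤ 10 * ε * M ^ 3 / w := by
  have hM1 : 1 ≤ M := hglb.trans hgub
  set G := ‖g‖ with hGdef
  have hG0 : (0:ℝ) < G := lt_of_lt_of_le one_pos hglb
  have hnormu : ‖(w * G ^ 2) • g‖ = w * G ^ 3 := by
    rw [norm_smul, Real.norm_eq_abs, abs_of_pos (by positivity)]; ring
  have hna : |‖v‖ - w * G ^ 3| ≤ ε := by
    calc |‖v‖ - w * G ^ 3| = |‖v‖ - ‖(w * G ^ 2) • g‖| := by rw [hnormu]
    _ ≤ ‖v - (w * G ^ 2) • g‖ := abs_norm_sub_norm_le _ _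
    _ ≤ ε := hv
  have hna' := abs_le.1 hna
  have hG3 : 1 ≤ G ^ 3 := by nlinarith [pow_le_pow_left₀ (by norm_num : (0:ℝ) ≤ 1) hglb 3]
  have haw : w ≤ w * G ^ 3 := by nlinarith
  have hn_lb : w / 2 ≤ ‖v‖ := by nlinarith [hna'.1]
  have hn_pos : 0 < ‖v‖ := lt_of_lt_of_le (by positivity) hn_lb
  set n := ‖v‖ with hndef
  set a := w * G ^ 3 with hadef
  have ha_pos : 0 < a := by positivity
  set t := n ^ ((1:ℝ)/3) with htdef
  set s := a ^ ((1:ℝ)/3) with hsdef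
  have ht_pos : 0 < t := Real.rpow_pos_of_pos hn_pos _
  have hs_pos : 0 < s := Real.rpow_pos_of_pos ha_pos _
  have ht3 : t ^ 3 = n := by
    rw [htdef, ← Real.rpow_natCast (n ^ ((1:ℝ)/3)) 3, ← Real.rpow_mul hn_pos.le]
    norm_num
  have hs3 : s ^ 3 = a := by
    rw [hsdef, ← Real.rpow_natCast (a ^ ((1:ℝ)/3)) 3, ← Real.rpow_mul ha_pos.le]
    norm_num
  have h23 : n ^ ((2:ℝ)/3) = t ^ 2 := by
    rw [htdef, ← Real.rpow_natCast (n ^ ((1:ℝ)/3)) 2, ← Real.rpow_mul hn_pos.le]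
    norm_num
  have hsG : s = w ^ ((1:ℝ)/3) * G := by
    rw [hsdef, hadef, Real.mul_rpow hw0.le (by positivity), ← Real.rpow_natCast G 3,
      ← Real.rpow_mul hG0.le]
    norm_num

  clear_value G n a t s
  have hsM : s ≤ M := by
    have hs3M : s ^ 3 ≤ M ^ 3 := by
      rw [hs3, hadef]; nlinarith [pow_le_pow_left₀ hG0.le hgub 3]
    exact (pow_le_pow_iff_left₀ hs_pos.le (by positivity) (by norm_num)).1 hs3M
  have htM : t ≤ 2 * M := by
    have hM3 : 1 ≤ M ^ 3 := by nlinarith [pow_le_pow_left₀ (by norm_num : (0:ℝ) ≤ 1) hM1 3]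
    have ht3M : t ^ 3 ≤ (2 * M) ^ 3 := by
      rw [ht3]; nlinarith [hna'.2, pow_le_pow_left₀ hG0.le hgub 3]
    exact (pow_le_pow_iff_left₀ ht_pos.le (by positivity) (by norm_num)).1 ht3M
  have hw2t : w ≤ 2 * t ^ 3 := by rw [ht3]; linarith
  have hD : |s - t| * (s ^ 2 + s * t + t ^ 2) ≤ ε := by
    have h1 : (s - t) * (s ^ 2 + s * t + t ^ 2) = a - n := by
      rw [← hs3, ← ht3]; ring
    have hQ : (0:ℝ) < s ^ 2 + s * t + t ^ 2 := by positivity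
    have h2 : |s - t| * (s ^ 2 + s * t + t ^ 2)
        = |(s - t) * (s ^ 2 + s * t + t ^ 2)| := by
      rw [abs_mul, abs_of_pos hQ]
    rw [h2, h1, abs_sub_comm]; exact hna
  have hdecomp : ((n ^ ((2 : ℝ) / 3))⁻¹ • v - (w ^ ((1 : ℝ) / 3)) • g)
      = (t ^ 2)⁻¹ • (v - (w * G ^ 2) • g)
        + ((w * G ^ 2) / t ^ 2 - w ^ ((1 : ℝ) / 3)) • g := by
    rw [h23]; rw [div_eq_mul_inv]; module
  rw [hdecomp]
  have hb1 : ‖(t ^ 2)⁻¹ • (v - (w * G ^ 2) • g)‖ ≤ ε / t ^ 2 := by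
    rw [norm_smul, Real.norm_eq_abs, abs_of_pos (by positivity), div_eq_inv_mul]
    exact mul_le_mul_of_nonneg_left hv (by positivity)
  have hcG : (w * G ^ 2 / t ^ 2 - w ^ ((1 : ℝ) / 3)) * G
      = (s * (s + t) / t ^ 2) * (s - t) := by
    have expand : (s * (s + t) / t ^ 2) * (s - t) = s ^ 3 / t ^ 2 - s := by
      field_simp; ring
    rw [expand, hs3, hsG, hadef]; field_simp
  have hb2 : ‖((w * G ^ 2) / t ^ 2 - w ^ ((1 : ℝ) / 3)) • g‖
      = s * |s - t| * (s + t) / t ^ 2 := by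
    rw [norm_smul, Real.norm_eq_abs, ← hGdef]
    calc |w * G ^ 2 / t ^ 2 - w ^ ((1 : ℝ) / 3)| * G
        = |(w * G ^ 2 / t ^ 2 - w ^ ((1 : ℝ) / 3)) * G| := by
          rw [abs_mul, abs_of_pos hG0]
      _ = |(s * (s + t) / t ^ 2) * (s - t)| := by rw [hcG]
      _ = (s * (s + t) / t ^ 2) * |s - t| := by
          rw [abs_mul, abs_of_pos (by positivity)]
      _ = s * |s - t| * (s + t) / t ^ 2 := by ring
  refine (norm_add_le _ _).trans ?_
  rw [hb2]
  have final : ε / t ^ 2 + s * |s - t| * (s + t) / t ^ 2 ≤ 10 * ε * M ^ 3 / w := by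
    rw [← add_div, div_le_div_iff₀ (by positivity) hw0]
    set D := |s - t| with hDdef
    have hD0 : 0 ≤ D := hDdef ▸ abs_nonneg _
    clear_value D
    have key1 : s * D * (s + t) * t ≤ s * ε := by
      nlinarith [mul_le_mul_of_nonneg_left hD hs_pos.le,
        mul_nonneg (mul_nonneg hs_pos.le hD0) (sq_nonneg s)]
    have hM0 : (0:ℝ) ≤ M := by linarith
    have hM3 : M ≤ M ^ 3 := by
      nlinarith [mul_nonneg (sub_nonneg.2 hM1) (sq_nonneg M),
        mul_nonneg (sub_nonneg.2 hM1) hM0]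
    have e1 : ε * w ≤ 4 * ε * M * t ^ 2 := by
      have h1 : ε * w ≤ ε * (2 * t ^ 3) := mul_le_mul_of_nonneg_left hw2t hε0
      have h2 : (2 * ε * t ^ 2) * t ≤ (2 * ε * t ^ 2) * (2 * M) :=
        mul_le_mul_of_nonneg_left htM (by positivity)
      nlinarith [h1, h2]
    have e2 : (s * D * (s + t)) * w ≤ 2 * ε * M * t ^ 2 := by
      have h1 : (s * D * (s + t)) * w ≤ (s * D * (s + t)) * (2 * t ^ 3) :=
        mul_le_mul_of_nonneg_left hw2t (by positivity)
      have h3 : (2 * t ^ 2) * (s * D * (s + t) * t) ≤ (2 * t ^ 2) * (s * ε) :=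
        mul_le_mul_of_nonneg_left key1 (by positivity)
      have h4 : (2 * t ^ 2) * (s * ε) ≤ (2 * t ^ 2) * (M * ε) :=
        mul_le_mul_of_nonneg_left (mul_le_mul_of_nonneg_right hsM hε0) (by positivity)
      nlinarith [h1, h3, h4]
    have e3 : 6 * ε * M * t ^ 2 ≤ 10 * ε * M ^ 3 * t ^ 2 := by
      have h5 : (6 * ε * t ^ 2) * M ≤ (6 * ε * t ^ 2) * M ^ 3 :=
        mul_le_mul_of_nonneg_left hM3 (by positivity)
      have h6 : (0:ℝ) ≤ ε * M ^ 3 * t ^ 2 := by positivity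
      nlinarith [h5, h6]
    linarith [e1, e2, e3]
  linarith [hb1, final]

/-- "cube root extraction": if `v` is an `ε`-approximation of
`w ‖g‖² g` with `1 ≤ ‖g‖ ≤ M`, `0 < w ≤ 1` and `0 ≤ ε ≤ w/2`, then
`‖v/‖v‖^{2/3} − w^{1/3} g‖ ≤ 10 ε M³ / w`. -/
theorem cube_root_extraction {d : ℕ} (M w ε : ℝ)
    (g v : Fin d → ℝ)
    (hglb : 1 ≤ eNorm g) (hgub : eNorm g ≤ M)
    (hw0 : 0 < w) (hw1 : w ≤ 1)
    (hε0 : 0 ≤ ε) (hεw : ε ≤ w / 2)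
    (hv : eNorm (v - (w * (eNorm g) ^ 2) • g) ≤ ε) :
    eNorm (((eNorm v) ^ ((2 : ℝ) / 3))⁻¹ • v - (w ^ ((1 : ℝ) / 3)) • g)
      ≤ 10 * ε * M ^ 3 / w := by
  simp only [eNorm_eq_norm, map_sub, map_smul] at hglb hgub hv ⊢
  exact key_lemma M w ε (toE d g) (toE d v) hglb hgub hw0 hw1 hε0 hεw hv
end
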